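/- arXiv:1902.07260 — 10 statements merged into one kernel-verified Lean document; each statement's English description precedes it below -/
import Mathlib

section
/- A preference ⪰' is an upper bound of a set P of preferences with respect to single-crossing dominance if and only if for every ≿-comparable pair x ≿ y: (i) if there exists a P-chain from x to y then x ⪰' y, and (ii) if y ⪰' x then there is no strict P-chain from x to y. -/
variable {X : Type*}

/-- Strict part of a binary relation. -/
def SPref (R : X → X → Prop) (x y : X) : Prop := R x y ∧ ¬ R y x

/-- A preference: a complete and transitive binary relation. -/
def IsPref (R : X → X → Prop) : Prop := (∀ x y, R x y ∨ R y x) ∧ Transitive R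

/-- Single-crossing dominance (`R'` dominates `R`) w.r.t. the partial order `≤`. -/
def SC [PartialOrder X] (R' R : X → X → Prop) : Prop :=
  ∀ x y : X, y ≤ x → (R x y → R' x y) ∧ (SPref R x y → SPref R' x y)

/-- Upper bound of a set of preferences w.r.t. single-crossing dominance. -/
def IsUB [PartialOrder X] (P : Set (X → X → Prop)) (R' : X → X → Prop) : Prop :=
  IsPref R' ∧ ∀ R ∈ P, SC R' R

/-- Minimum upper bound of a set of preferences w.r.t. single-crossing dominance. -/
def IsMUB [PartialOrder X] (P : Set (X → X → Prop)) (Rs : X → X → Prop) : Prop :=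
  IsUB P Rs ∧ ∀ R'', IsUB P R'' → SC R'' Rs

/-- A `P`-chain from `x` to `y`: a `≤`-decreasing finite sequence from `x` to `y`
such that at each step some preference in `P` weakly prefers the earlier element. -/
def PChain [PartialOrder X] (P : Set (X → X → Prop)) (x y : X) : Prop :=
  ∃ (K : ℕ) (w : ℕ → X), 0 < K ∧ w 0 = x ∧ w (K - 1) = y ∧
    ∀ k, k + 1 < K → w (k + 1) ≤ w k ∧ ∃ R ∈ P, R (w k) (w (k + 1))

/-- A strict `P`-chain: a `P`-chain in which some step is strictly preferred by some
member of `P`. -/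
def StrictPChain [PartialOrder X] (P : Set (X → X → Prop)) (x y : X) : Prop :=
  ∃ (K : ℕ) (w : ℕ → X), 0 < K ∧ w 0 = x ∧ w (K - 1) = y ∧
    (∀ k, k + 1 < K → w (k + 1) ≤ w k ∧ ∃ R ∈ P, R (w k) (w (k + 1))) ∧
    ∃ k, k + 1 < K ∧ ∃ R ∈ P, SPref R (w k) (w (k + 1))

lemma seg_rel {X : Type*} {R' : X → X → Prop} (hR' : IsPref R') {K : ℕ} {w : ℕ → X}
    (hstep : ∀ k, k + 1 < K → R' (w k) (w (k + 1))) :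
    ∀ i j, i ≤ j → j < K → R' (w i) (w j) := by
  intro i j hij hjK
  induction j, hij using Nat.le_induction with
  | base => exact (hR'.1 (w i) (w i)).elim id id
  | succ j hij ih => exact hR'.2 (ih (by omega)) (hstep j hjK)

/-- UB characterisation lemma: a preference `R'` is an upper bound of `P` iff for every
comparable pair `x ≥ y`, a `P`-chain from `x` to `y` forces `R' x y`, and `R' y x` forces
the absence of a strict `P`-chain from `x` to `y`. -/
theorem ub_characterisation (X : Type*) [Nonempty X] [PartialOrder X]
    (P : Set (X → X → Prop)) (hP : ∀ R ∈ P, IsPref R)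
    (R' : X → X → Prop) (hR' : IsPref R') :
    IsUB P R' ↔
      ∀ x y : X, y ≤ x →
        (PChain P x y → R' x y) ∧ (R' y x → ¬ StrictPChain P x y) := by
  constructor
  · rintro ⟨-, hUB⟩ x y hyx
    constructor
    · rintro ⟨K, w, hK, hw0, hwK, hsteps⟩
      have hstep : ∀ k, k + 1 < K → R' (w k) (w (k + 1)) := by
        intro k hk
        obtain ⟨hle, R, hRP, hR⟩ := hsteps k hk
        exact (hUB R hRP _ _ hle).1 hR
      have := seg_rel hR' hstep 0 (K - 1) (by omega) (by omega)
      rwa [hw0, hwK] at this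
    · rintro hR'yx ⟨K, w, hK, hw0, hwK, hsteps, k, hk, R, hRP, hS⟩
      have hstep : ∀ k, k + 1 < K → R' (w k) (w (k + 1)) := by
        intro k hk
        obtain ⟨hle, R, hRP, hR⟩ := hsteps k hk
        exact (hUB R hRP _ _ hle).1 hR
      have hS' : SPref R' (w k) (w (k + 1)) :=
        (hUB R hRP _ _ (hsteps k hk).1).2 hS
      have h1 : R' x (w k) := by
        have := seg_rel hR' hstep 0 k (by omega) (by omega); rwa [hw0] at this
      have h2 : R' (w (k + 1)) y := by
        have := seg_rel hR' hstep (k + 1) (K - 1) (by omega) (by omega)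
        rwa [hwK] at this
      exact hS'.2 (hR'.2 (hR'.2 h2 hR'yx) h1)
  · intro h
    refine ⟨hR', fun R hRP x y hyx => ⟨fun hRxy => ?_, fun hS => ?_⟩⟩
    · refine (h x y hyx).1 ⟨2, fun n => if n = 0 then x else y, by norm_num, by norm_num,
        by norm_num, ?_⟩
      intro k hk
      have : k = 0 := by omega
      subst this
      simpa using ⟨hyx, R, hRP, hRxy⟩
    · have hchain : ∀ k, k + 1 < 2 →
          (fun n => if n = 0 then x else y) (k + 1) ≤ (fun n => if n = 0 then x else y) k ∧
          ∃ R ∈ P, R ((fun n => if n = 0 then x else y) k)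
            ((fun n => if n = 0 then x else y) (k + 1)) := by
        intro k hk
        have : k = 0 := by omega
        subst this
        simpa using ⟨hyx, R, hRP, hS.1⟩
      have hnyx : ¬ R' y x := fun hyx' =>
        (h x y hyx).2 hyx' ⟨2, fun n => if n = 0 then x else y, by norm_num, by norm_num,
          by norm_num, hchain, 0, by norm_num, R, hRP, by simpa using hS⟩
      exact ⟨(h x y hyx).1 ⟨2, fun n => if n = 0 then x else y, by norm_num, by norm_num,
        by norm_num, hchain⟩, hnyx⟩
end

section
/- A preference ⪰* is a minimum upper bound (with respect to single-crossing dominance S) of a set P of preferences if and only if for every ≿-comparable pair x ≿ y: x ⪰* y iff there is a P-chain from x to y, and y ⪰* x iff there is no strict P-chain from x to y. -/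
/-!
Every upper bound ranks `x` above `y` along a `P`-chain and strictly above along a strict
`P`-chain, by transitivity. Conversely, if there is no strict `P`-chain from `x` to `y`, the
chain relation with `y` glued on top of `x` is a preorder whose strict part still contains every
strict `P`-step, and any total extension of it (Szpilrajn) is an upper bound ranking `y` above
`x`, strictly so when there is no `P`-chain from `x` to `y`. So the comparisons of a minimum
upper bound on comparable pairs are exactly those forced by chains.
-/

variable {X : Type*}

open Relation

section SeqPath

variable {α : Type*} {r : α → α → Prop}

def IsSeqPath (r : α → α → Prop) (K : ℕ) (w : ℕ → α) (x y : α) : Prop :=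
  0 < K ∧ w 0 = x ∧ w (K - 1) = y ∧ ∀ k, k + 1 < K → r (w k) (w (k + 1))

lemma isSeqPath_const (x : α) : IsSeqPath r 1 (fun _ => x) x x :=
  ⟨one_pos, rfl, rfl, fun k hk => absurd hk (by omega)⟩

lemma IsSeqPath.append {K₁ K₂ : ℕ} {w₁ w₂ : ℕ → α} {x c d y : α}
    (h₁ : IsSeqPath r K₁ w₁ x c) (hcd : r c d) (h₂ : IsSeqPath r K₂ w₂ d y) :
    IsSeqPath r (K₁ + K₂) (fun k => if k < K₁ then w₁ k else w₂ (k - K₁)) x y := by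
  obtain ⟨hK₁, hx, hc, hw₁⟩ := h₁
  obtain ⟨hK₂, hd, hy, hw₂⟩ := h₂
  refine ⟨by omega, by simp [hK₁, hx], ?_, fun k hk => ?_⟩ <;> dsimp only
  · rw [if_neg (by omega), show K₁ + K₂ - 1 - K₁ = K₂ - 1 by omega, hy]
  rcases lt_trichotomy (k + 1) K₁ with hlt | heq | hgt
  · rw [if_pos (by omega), if_pos hlt]
    exact hw₁ k hlt
  · rw [if_pos (by omega), if_neg (by omega), show k + 1 - K₁ = 0 by omega,
      show k = K₁ - 1 by omega, hc, hd]
    exact hcd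
  · rw [if_neg (by omega), if_neg (by omega), show k + 1 - K₁ = k - K₁ + 1 by omega]
    exact hw₂ (k - K₁) (by omega)

lemma IsSeqPath.reflTransGen {K : ℕ} {w : ℕ → α} {x y : α} (h : IsSeqPath r K w x y)
    {i j : ℕ} (hij : i ≤ j) (hj : j < K) : ReflTransGen r (w i) (w j) := by
  induction j, hij using Nat.le_induction with
  | base => exact .refl
  | succ j _ ih => exact (ih (by omega)).tail (h.2.2.2 j hj)

lemma exists_isSeqPath_iff_reflTransGen {x y : α} :
    (∃ K w, IsSeqPath r K w x y) ↔ ReflTransGen r x y := by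
  constructor
  · rintro ⟨K, w, h⟩
    simpa [h.2.1, h.2.2.1] using h.reflTransGen (Nat.zero_le _) (Nat.sub_lt h.1 one_pos)
  · intro h
    induction h with
    | refl => exact ⟨1, _, isSeqPath_const x⟩
    | tail _ hbc ih =>
      obtain ⟨K, w, hw⟩ := ih
      exact ⟨_, _, hw.append hbc (isSeqPath_const _)⟩

lemma exists_isSeqPath_with_step_iff {s : α → α → Prop} {x y : α} :
    (∃ K w, IsSeqPath r K w x y ∧ ∃ k, k + 1 < K ∧ s (w k) (w (k + 1))) ↔
      ∃ c d, ReflTransGen r x c ∧ r c d ∧ s c d ∧ ReflTransGen r d y := by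
  constructor
  · rintro ⟨K, w, h, k, hk, hs⟩
    refine ⟨w k, w (k + 1), ?_, h.2.2.2 k hk, hs, ?_⟩
    · simpa [h.2.1] using h.reflTransGen (Nat.zero_le k) (by omega)
    · simpa [h.2.2.1] using h.reflTransGen (Nat.le_sub_one_of_lt hk) (Nat.sub_lt h.1 one_pos)
  · rintro ⟨c, d, hxc, hcd, hs, hdy⟩
    obtain ⟨K₁, w₁, h₁⟩ := exists_isSeqPath_iff_reflTransGen.mpr hxc
    obtain ⟨K₂, w₂, h₂⟩ := exists_isSeqPath_iff_reflTransGen.mpr hdy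
    have hK₁ := h₁.1
    have hK₂ := h₂.1
    refine ⟨_, _, h₁.append hcd h₂, K₁ - 1, by omega, ?_⟩
    simpa [hK₁, Nat.sub_add_cancel hK₁, h₁.2.2.1, h₂.2.1] using hs

end SeqPath

lemma exists_isPref_extending {α : Type*} (T : α → α → Prop) [IsPreorder α T] :
    ∃ R, IsPref R ∧ ∀ a b, (T a b → R a b) ∧ (SPref T a b → SPref R a b) := by
  let _ : Preorder α :=
    { le := fun a b => T b a
      le_refl := refl_of T
      le_trans := fun _ _ _ hab hbc => trans_of T hbc hab }
  let f := toLinearExtension ∘ toAntisymmetrization (α := α) (· ≤ ·)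
  have hmono : Monotone f := toLinearExtension.monotone.comp toAntisymmetrization_mono
  have hstrict : StrictMono f :=
    (toLinearExtension.monotone.strictMono_of_injective fun _ _ h => h).comp
      fun _ _ h => toAntisymmetrization_lt_toAntisymmetrization_iff.mpr h
  refine ⟨fun a b => f b ≤ f a, ⟨fun a b => le_total _ _, fun _ _ _ hab hbc => hbc.trans hab⟩,
    fun a b => ⟨fun h => hmono h, fun h => ?_⟩⟩
  have hlt : f b < f a := hstrict (show b < a from h)
  exact ⟨hlt.le, hlt.not_ge⟩

section Chains

variable [PartialOrder X] {P : Set (X → X → Prop)} {R : X → X → Prop} {x y : X}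

def Step (P : Set (X → X → Prop)) (a b : X) : Prop := b ≤ a ∧ ∃ R ∈ P, R a b

def StrictReach (P : Set (X → X → Prop)) (x y : X) : Prop :=
  ∃ c d, ReflTransGen (Step P) x c ∧ Step P c d ∧ (∃ R ∈ P, SPref R c d) ∧
    ReflTransGen (Step P) d y

lemma pChain_iff_reflTransGen : PChain P x y ↔ ReflTransGen (Step P) x y := by
  rw [← exists_isSeqPath_iff_reflTransGen]
  rfl

lemma strictPChain_iff_strictReach : StrictPChain P x y ↔ StrictReach P x y := by
  rw [StrictReach, ← exists_isSeqPath_with_step_iff]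
  simp only [StrictPChain, IsSeqPath, Step, and_assoc]

lemma StrictReach.reflTransGen (h : StrictReach P x y) : ReflTransGen (Step P) x y := by
  obtain ⟨c, d, hxc, hcd, -, hdy⟩ := h
  exact (hxc.tail hcd).trans hdy

lemma le_of_reflTransGen_step (h : ReflTransGen (Step P) x y) : y ≤ x := by
  induction h with
  | refl => exact le_rfl
  | tail _ hstep ih => exact hstep.1.trans ih

lemma not_strictReach_self : ¬ StrictReach P x x := by
  rintro ⟨c, d, hxc, hcd, ⟨R, -, hR⟩, hdx⟩
  obtain rfl : c = d :=
    le_antisymm ((le_of_reflTransGen_step hxc).trans (le_of_reflTransGen_step hdx)) hcd.1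
  exact hR.2 hR.1

lemma IsUB.rel_of_reflTransGen (hR : IsUB P R) (h : ReflTransGen (Step P) x y) : R x y := by
  induction h with
  | refl => exact (hR.1.1 x x).elim id id
  | tail _ hstep ih =>
    obtain ⟨hle, Q, hQ, hQab⟩ := hstep
    exact hR.1.2 ih ((hR.2 Q hQ _ _ hle).1 hQab)

lemma IsUB.sPref_of_strictReach (hR : IsUB P R) (h : StrictReach P x y) : SPref R x y := by
  obtain ⟨c, d, hxc, ⟨hdc, -⟩, ⟨Q, hQ, hQcd⟩, hdy⟩ := h
  have hRxc := hR.rel_of_reflTransGen hxc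
  have hRdy := hR.rel_of_reflTransGen hdy
  obtain ⟨hRcd, hRdc⟩ := (hR.2 Q hQ c d hdc).2 hQcd
  exact ⟨hR.1.2 (hR.1.2 hRxc hRcd) hRdy, fun hRyx => hRdc (hR.1.2 (hR.1.2 hRdy hRyx) hRxc)⟩

lemma exists_isUB_of_not_strictReach (hxy : ¬ StrictReach P x y) :
    ∃ R, IsUB P R ∧ R y x ∧ (R x y → ReflTransGen (Step P) x y) := by
  -- chains from `a` to `b`, possibly through an added link from `y` to `x`
  let T a b :=
    ReflTransGen (Step P) a b ∨ (ReflTransGen (Step P) a y ∧ ReflTransGen (Step P) x b)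
  have : IsPreorder X T :=
    { refl := fun _ => .inl .refl
      trans := by
        rintro a b c (hab | ⟨hay, hxb⟩) (hbc | ⟨hby, hxc⟩)
        · exact .inl (hab.trans hbc)
        · exact .inr ⟨hab.trans hby, hxc⟩
        · exact .inr ⟨hay, hxb.trans hbc⟩
        · exact .inr ⟨hay, hxc⟩ }
  obtain ⟨R, hR, hTR⟩ := exists_isPref_extending T
  have hTyx : T y x := .inr ⟨.refl, .refl⟩
  refine ⟨R, ⟨hR, fun Q hQ a b hba => ⟨fun hQab => ?_, fun hQab => ?_⟩⟩, (hTR y x).1 hTyx,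
    fun hRxy => ?_⟩
  · exact (hTR a b).1 (.inl (.single ⟨hba, Q, hQ, hQab⟩))
  · have hab : Step P a b := ⟨hba, Q, hQ, hQab.1⟩
    refine (hTR a b).2 ⟨.inl (.single hab), ?_⟩
    rintro (hreach | ⟨hby, hxa⟩)
    · exact not_strictReach_self ⟨a, b, .refl, hab, ⟨Q, hQ, hQab⟩, hreach⟩
    · exact hxy ⟨a, b, hxa, hab, ⟨Q, hQ, hQab⟩, hby⟩
  · by_contra hxy'
    have hTxy : ¬ T x y := by rintro (h | ⟨h, -⟩) <;> exact hxy' h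
    exact ((hTR y x).2 ⟨hTyx, hTxy⟩).2 hRxy

end Chains

section MUB

variable [PartialOrder X] {P : Set (X → X → Prop)} {Rs : X → X → Prop} {x y : X}

lemma IsMUB.rel_iff_reflTransGen (h : IsMUB P Rs) (hyx : y ≤ x) :
    Rs x y ↔ ReflTransGen (Step P) x y := by
  refine ⟨fun hxy => ?_, h.1.rel_of_reflTransGen⟩
  by_contra hn
  obtain ⟨R, hR, -, hRxy⟩ := exists_isUB_of_not_strictReach fun hS => hn hS.reflTransGen
  exact hn (hRxy ((h.2 R hR x y hyx).1 hxy))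

lemma IsMUB.rel_iff_not_strictReach (h : IsMUB P Rs) (hyx : y ≤ x) :
    Rs y x ↔ ¬ StrictReach P x y := by
  refine ⟨fun hRyx hS => (h.1.sPref_of_strictReach hS).2 hRyx, fun hS => ?_⟩
  obtain ⟨R, hR, hRyx, -⟩ := exists_isUB_of_not_strictReach hS
  by_contra hn
  exact ((h.2 R hR x y hyx).2 ⟨(h.1.1.1 x y).resolve_right hn, hn⟩).2 hRyx

lemma isMUB_of_forall (hRs : IsPref Rs)
    (h : ∀ x y, y ≤ x → (Rs x y ↔ ReflTransGen (Step P) x y) ∧ (Rs y x ↔ ¬ StrictReach P x y)) :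
    IsMUB P Rs := by
  have hub : IsUB P Rs := by
    refine ⟨hRs, fun Q hQ a b hba => ⟨fun hQab => (h a b hba).1.2 (.single ⟨hba, Q, hQ, hQab⟩),
      fun hQab => ⟨(h a b hba).1.2 (.single ⟨hba, Q, hQ, hQab.1⟩), fun hRba => ?_⟩⟩⟩
    exact (h a b hba).2.1 hRba ⟨a, b, .refl, ⟨hba, Q, hQ, hQab.1⟩, ⟨Q, hQ, hQab⟩, .refl⟩
  refine ⟨hub, fun R hR a b hba => ⟨fun hab => hR.rel_of_reflTransGen ((h a b hba).1.1 hab),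
    fun hab => hR.sPref_of_strictReach ?_⟩⟩
  by_contra hS
  exact hab.2 ((h a b hba).2.2 hS)

theorem isMUB_iff_forall (hRs : IsPref Rs) :
    IsMUB P Rs ↔
      ∀ x y, y ≤ x → (Rs x y ↔ ReflTransGen (Step P) x y) ∧ (Rs y x ↔ ¬ StrictReach P x y) :=
  ⟨fun h _ _ hyx => ⟨h.rel_iff_reflTransGen hyx, h.rel_iff_not_strictReach hyx⟩,
    isMUB_of_forall hRs⟩

end MUB

theorem mub_characterisation_general (X : Type*) [PartialOrder X]
    (P : Set (X → X → Prop))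
    (Rs : X → X → Prop) (hRs : IsPref Rs) :
    IsMUB P Rs ↔
      ∀ x y : X, y ≤ x →
        (Rs x y ↔ PChain P x y) ∧ (Rs y x ↔ ¬ StrictPChain P x y) := by
  simpa only [pChain_iff_reflTransGen, strictPChain_iff_strictReach] using isMUB_iff_forall hRs

/-- Characterisation theorem: a preference `Rs` is a minimum upper bound of `P` iff for
every comparable pair `x ≥ y`, `Rs x y` holds iff there is a `P`-chain from `x` to `y`,
and `Rs y x` holds iff there is no strict `P`-chain from `x` to `y`. -/
theorem mub_characterisation (X : Type*) [Nonempty X] [PartialOrder X]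
    (P : Set (X → X → Prop)) (hP : ∀ R ∈ P, IsPref R)
    (Rs : X → X → Prop) (hRs : IsPref Rs) :
    IsMUB P Rs ↔
      ∀ x y : X, y ≤ x →
        (Rs x y ↔ PChain P x y) ∧ (Rs y x ↔ ¬ StrictPChain P x y) :=
  mub_characterisation_general X P Rs hRs
end

section
/- Let P be a set of preferences and x ≿ y in X. If there is no P-chain from x to y, then there exists an upper bound ⪰'' of P (with respect to single-crossing dominance) such that x is not weakly preferred to y under ⪰'' (i.e., y ≻'' x). -/
variable {X : Type*}

theorem pchain_refl [PartialOrder X] (P : Set (X → X → Prop)) (a : X) : PChain P a a :=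
  ⟨1, fun _ => a, one_pos, rfl, rfl, fun _ hk => absurd hk (by omega)⟩

theorem pchain_step [PartialOrder X] {P : Set (X → X → Prop)} {R : X → X → Prop}
    (hR : R ∈ P) {a b : X} (hab : b ≤ a) (hr : R a b) : PChain P a b := by
  refine ⟨2, fun k => if k = 0 then a else b, by omega, rfl, rfl, fun k hk => ?_⟩
  have hk0 : k = 0 := by omega
  subst hk0
  simp only [if_pos rfl, if_neg (by omega : (1:ℕ) ≠ 0)]
  exact ⟨hab, R, hR, hr⟩

theorem pchain_trans [PartialOrder X] {P : Set (X → X → Prop)} {a b c : X}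
    (h1 : PChain P a b) (h2 : PChain P b c) : PChain P a c := by
  obtain ⟨K, w, hK, hw0, hwK, hws⟩ := h1
  obtain ⟨L, v, hL, hv0, hvL, hvs⟩ := h2
  refine ⟨K + L - 1, fun k => if k < K then w k else v (k - (K - 1)), by omega, ?_, ?_, ?_⟩
  · simp only [if_pos hK]; exact hw0
  · by_cases hL1 : L = 1
    · have : K + L - 1 - 1 < K := by omega
      simp only [if_pos this]
      have : K + L - 1 - 1 = K - 1 := by omega
      rw [this, hwK, ← hv0]
      have : L - 1 = 0 := by omega
      rw [← hvL, this]
    · have hnl : ¬ (K + L - 1 - 1 < K) := by omega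
      simp only [if_neg hnl]
      have : K + L - 1 - 1 - (K - 1) = L - 1 := by omega
      rw [this, hvL]
  · intro k hk
    by_cases h1k : k + 1 < K
    · have hkK : k < K := by omega
      simp only [if_pos h1k, if_pos hkK]
      exact hws k h1k
    · by_cases h2k : k + 1 = K
      · have hkK : k < K := by omega
        have hL2 : 1 < L := by omega
        simp only [if_neg h1k, if_pos hkK]
        have e1 : k + 1 - (K - 1) = 1 := by omega
        rw [e1]
        have hk' : k = K - 1 := by omega
        rw [hk', hwK, ← hv0]
        have hstep := hvs 0 (by omega)
        simpa using hstep
      · have hkK : ¬ k < K := by omega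
        simp only [if_neg h1k, if_neg hkK]
        have e1 : k + 1 - (K - 1) = (k - (K - 1)) + 1 := by omega
        rw [e1]
        exact hvs (k - (K - 1)) (by omega)

theorem total_ext {α : Type*} (r : α → α → Prop) (hre : Reflexive r) (htr : Transitive r) :
    ∃ R : α → α → Prop, IsPref R ∧ (∀ a b, r a b → R a b) ∧
      ∀ a b, r a b → ¬ r b a → ¬ R b a := by
  let s : Setoid α := ⟨fun a b => r a b ∧ r b a,
    ⟨fun a => ⟨hre a, hre a⟩, fun h => ⟨h.2, h.1⟩,
      fun h1 h2 => ⟨htr h1.1 h2.1, htr h2.2 h1.2⟩⟩⟩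
  have hwd : ∀ (a b a' b' : α), a ≈ a' → b ≈ b' → r a b = r a' b' := by
    intro a b a' b' ha hb
    exact propext ⟨fun hab => htr (htr ha.2 hab) hb.1, fun hab => htr (htr ha.1 hab) hb.2⟩
  let q : Quotient s → Quotient s → Prop := Quotient.lift₂ r hwd
  have hq : ∀ a b : α, q (Quotient.mk s a) (Quotient.mk s b) ↔ r a b := fun a b => Iff.rfl
  haveI : IsPartialOrder (Quotient s) q :=
    { refl := fun a => Quotient.inductionOn a fun a => hre a
      trans := fun a b c => Quotient.inductionOn₃ a b c fun a b c hab hbc => htr hab hbc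
      antisymm := fun a b => Quotient.inductionOn₂ a b fun a b hab hba =>
        Quotient.sound ⟨hab, hba⟩ }
  obtain ⟨t, ht, hsub⟩ := extend_partialOrder q
  haveI := ht
  refine ⟨fun a b => t (Quotient.mk s a) (Quotient.mk s b), ⟨?_, ?_⟩, ?_, ?_⟩
  · intro a b; exact ht.total _ _
  · intro a b c hab hbc; exact ht.trans _ _ _ hab hbc
  · intro a b hab; exact hsub _ _ hab
  · intro a b hab hnba hta
    have htb : t (Quotient.mk s a) (Quotient.mk s b) := hsub _ _ hab
    have : Quotient.mk s a = Quotient.mk s b := ht.antisymm _ _ htb hta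
    exact hnba (Quotient.exact this).2

/-- If there is no `P`-chain from `x` to `y` (where `x ≥ y`), then some upper bound of `P`
strictly prefers `y` to `x`. -/
theorem exists_ub_not_weak (X : Type*) [Nonempty X] [PartialOrder X]
    (P : Set (X → X → Prop)) (hP : ∀ R ∈ P, IsPref R)
    (x y : X) (hxy : y ≤ x) (h : ¬ PChain P x y) :
    ∃ R'' : X → X → Prop, IsUB P R'' ∧ SPref R'' y x := by
  classical
  -- chain dominance relation
  set C : X → X → Prop := fun a b => b ≤ a ∧ PChain P a b with hC
  have Crefl : ∀ a, C a a := fun a => ⟨le_refl a, pchain_refl P a⟩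
  have Ctrans : ∀ {a b c}, C a b → C b c → C a c := fun h1 h2 =>
    ⟨h2.1.trans h1.1, pchain_trans h1.2 h2.2⟩
  -- step relation: chain dominance, or the added pair (y, x)
  set stp : X → X → Prop := fun a b => C a b ∨ (a = y ∧ b = x) with hstp
  set r : X → X → Prop := Relation.ReflTransGen stp with hr
  have hrrefl : Reflexive r := fun a => Relation.ReflTransGen.refl
  have hrtrans : Transitive r := fun _ _ _ hab hbc => Relation.ReflTransGen.trans hab hbc
  -- key structure lemma for r
  have key : ∀ a b, r a b → C a b ∨ (C a y ∧ C x b) := by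
    intro a b hab
    induction hab with
    | refl => exact Or.inl (Crefl a)
    | tail hac hstep ih =>
      cases hstep with
      | inl hcb =>
        cases ih with
        | inl hA => exact Or.inl (Ctrans hA hcb)
        | inr hB => exact Or.inr ⟨hB.1, Ctrans hB.2 hcb⟩
      | inr heq =>
        rw [heq.2]
        rw [heq.1] at ih
        cases ih with
        | inl hA => exact Or.inr ⟨hA, Crefl x⟩
        | inr hB => exact Or.inr ⟨hB.1, Crefl x⟩
  have hnrxy : ¬ r x y := by
    intro hxyr
    rcases key x y hxyr with hA | hB
    · exact h hA.2
    · exact h hB.1.2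
  have hryx : r y x := Relation.ReflTransGen.single (Or.inr ⟨rfl, rfl⟩)
  obtain ⟨R'', hRpref, hext, hstrict⟩ := total_ext r hrrefl hrtrans
  refine ⟨R'', ⟨hRpref, ?_⟩, ?_⟩
  · -- upper bound
    intro R hRP
    intro a b hab
    constructor
    · intro hrab
      exact hext a b (Relation.ReflTransGen.single (Or.inl ⟨hab, pchain_step hRP hab hrab⟩))
    · intro hsp
      have hCab : C a b := ⟨hab, pchain_step hRP hab hsp.1⟩
      refine ⟨hext a b (Relation.ReflTransGen.single (Or.inl hCab)), ?_⟩
      have hnrba : ¬ r b a := by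
        intro hrba
        rcases key b a hrba with hA | hB
        · have : a = b := le_antisymm hA.1 hab
          subst this
          exact hsp.2 hsp.1
        · exact h (Ctrans (Ctrans hB.2 hCab) hB.1).2
      exact hstrict a b (Relation.ReflTransGen.single (Or.inl hCab)) hnrba
  · exact ⟨hext y x hryx, hstrict y x hryx hnrxy⟩
end

section
/- Let P be a set of preferences and x ≿ y in X. If there is no strict P-chain from x to y, then there exists an upper bound ⪰'' of P (with respect to single-crossing dominance) such that x is not strictly preferred to y under ⪰'' (i.e., y ⪰'' x). -/
variable {X : Type*}

/-- one step -/
def StepR [PartialOrder X] (P : Set (X → X → Prop)) (a b : X) : Prop :=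
  b ≤ a ∧ ∃ R ∈ P, R a b

lemma rtg_list {r : X → X → Prop} {u v : X} (h : Relation.ReflTransGen r u v) :
    ∃ l : List X, List.Chain r u l ∧ ∀ d, (u :: l).getD l.length d = v := by
  induction h using Relation.ReflTransGen.head_induction_on with
  | refl => exact ⟨[], List.Chain.nil, fun d => rfl⟩
  | @head u' c hstep _ ih =>
    obtain ⟨l, hc, hl⟩ := ih
    refine ⟨c :: l, List.Chain.cons hstep hc, fun d => ?_⟩
    show (c :: l).getD l.length d = v
    exact hl d

lemma chain_concat {r : X → X → Prop} :
    ∀ (l1 : List X) (u c : X), List.Chain r u l1 →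
      (∀ d, r ((u :: l1).getD l1.length d) c) → ∀ l2, List.Chain r c l2 →
      List.Chain r u (l1 ++ c :: l2) := by
  intro l1
  induction l1 with
  | nil => intro u c _ h l2 h2; exact List.Chain.cons (h u) h2
  | cons d t ih =>
    intro u c hc hr l2 h2
    rcases List.chain_cons.1 hc with ⟨hud, hdt⟩
    refine List.Chain.cons hud (ih d c hdt (fun e => ?_) l2 h2)
    have := hr e
    simpa using this

lemma rtg_le [PartialOrder X] {P : Set (X → X → Prop)} {u v : X}
    (h : Relation.ReflTransGen (StepR P) u v) : v ≤ u := by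
  induction h with
  | refl => exact le_rfl
  | tail _ hstep ih => exact le_trans hstep.1 ih

/-- encode: chains in ReflTransGen form plus one strict step give a StrictPChain -/
lemma encode [PartialOrder X] {P : Set (X → X → Prop)} {x a b y : X}
    (h1 : Relation.ReflTransGen (StepR P) x a)
    (hab : b ≤ a) (R0 : X → X → Prop) (hR0 : R0 ∈ P) (hS : SPref R0 a b)
    (h3 : Relation.ReflTransGen (StepR P) b y) :
    StrictPChain P x y := by
  obtain ⟨l1, hc1, hl1⟩ := rtg_list h1
  obtain ⟨l2, hc2, hl2⟩ := rtg_list h3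
  have hchain : List.Chain (StepR P) x (l1 ++ b :: l2) :=
    chain_concat l1 x b hc1 (fun d => by rw [hl1 d]; exact ⟨hab, R0, hR0, hS.1⟩) l2 hc2
  set L : List X := (x :: l1) ++ (b :: l2) with hLdef
  have hLlen : L.length = l1.length + l2.length + 2 := by
    simp only [hLdef, List.length_append, List.length_cons]; omega
  have hch' : List.Chain' (StepR P) L := hchain
  have ea : L.getD l1.length y = a := by
    rw [hLdef, List.getD_append _ _ _ _ (by simp)]
    exact hl1 y
  have eb : L.getD (l1.length + 1) y = b := by
    rw [hLdef, List.getD_append_right _ _ _ _ (by simp)]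
    simp
  refine ⟨L.length, fun k => L.getD k y, by simp [hLlen], by simp [hLdef], ?_, ?_, ?_⟩
  · -- last element is y
    show L.getD (L.length - 1) y = y
    rw [hLdef, List.getD_append_right _ _ _ _ (by simp only [List.length_append, List.length_cons]; omega)]
    have : ((x :: l1) ++ b :: l2).length - 1 - (x :: l1).length = l2.length := by
      simp only [List.length_append, List.length_cons]; omega
    rw [this]
    exact hl2 y
  · -- steps
    intro k hk
    have hget := List.isChain_iff_getElem.1 hch' k (by omega)
    have e1 : L.getD k y = L[k]'(by omega) := List.getD_eq_getElem _ _ (by omega)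
    have e2 : L.getD (k+1) y = L[k+1]'(by omega) := List.getD_eq_getElem _ _ (by omega)
    show L.getD (k+1) y ≤ L.getD k y ∧ ∃ R ∈ P, R (L.getD k y) (L.getD (k+1) y)
    rw [e1, e2]
    exact ⟨hget.1, hget.2⟩
  · -- strict step at index l1.length
    refine ⟨l1.length, by omega, R0, hR0, ?_⟩
    show SPref R0 (L.getD l1.length y) (L.getD (l1.length + 1) y)
    rw [ea, eb]
    exact hS

/-- If there is no strict `P`-chain from `x` to `y` (where `x ≥ y`), then some upper bound
of `P` weakly prefers `y` to `x`. -/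
theorem exists_ub_not_strict (X : Type*) [Nonempty X] [PartialOrder X]
    (P : Set (X → X → Prop)) (hP : ∀ R ∈ P, IsPref R)
    (x y : X) (hxy : y ≤ x) (h : ¬ StrictPChain P x y) :
    ∃ R'' : X → X → Prop, IsUB P R'' ∧ R'' y x := by
  classical
  set Q : X → X → Prop := fun a b => StepR P a b ∨ (a = y ∧ b = x) with hQ
  set Qr : X → X → Prop := fun a b => Relation.ReflTransGen Q a b with hQr
  have hQrrefl : ∀ a, Qr a a := fun a => Relation.ReflTransGen.refl
  have hQrtrans : ∀ a b c, Qr a b → Qr b c → Qr a c :=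
    fun a b c h1 h2 => Relation.ReflTransGen.trans h1 h2
  -- decomposition of Qr paths
  have decomp : ∀ u v, Qr u v →
      Relation.ReflTransGen (StepR P) u v ∨
      (Relation.ReflTransGen (StepR P) u y ∧ Relation.ReflTransGen (StepR P) x v) := by
    intro u v huv
    induction huv with
    | refl => exact Or.inl Relation.ReflTransGen.refl
    | @tail c d hc hcd ih =>
      rcases hcd with hst | ⟨hcy, hdx⟩
      · rcases ih with h1 | ⟨h1, h2⟩
        · exact Or.inl (h1.tail hst)
        · exact Or.inr ⟨h1, h2.tail hst⟩
      · subst hcy; subst hdx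
        rcases ih with h1 | ⟨h1, _⟩
        · exact Or.inr ⟨h1, Relation.ReflTransGen.refl⟩
        · exact Or.inr ⟨h1, Relation.ReflTransGen.refl⟩
  -- key: strict steps are never reversed by Qr
  have key : ∀ a b, b ≤ a → (∃ R ∈ P, SPref R a b) → ¬ Qr b a := by
    rintro a b hba ⟨R0, hR0, hS⟩ hqr
    rcases decomp b a hqr with h1 | ⟨h1, h2⟩
    · have : a ≤ b := rtg_le h1
      have hab : a = b := le_antisymm this hba
      subst hab
      exact hS.2 hS.1
    · exact h (encode h2 hba R0 hR0 hS h1)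
  -- quotient construction
  let s : Setoid X := ⟨fun a b => Qr a b ∧ Qr b a,
    ⟨fun a => ⟨hQrrefl a, hQrrefl a⟩,
     fun h => ⟨h.2, h.1⟩,
     fun h1 h2 => ⟨hQrtrans _ _ _ h1.1 h2.1, hQrtrans _ _ _ h2.2 h1.2⟩⟩⟩
  let Qq : Quotient s → Quotient s → Prop :=
    Quotient.lift₂ (fun a b => Qr a b) (by
      intro a b a' b' ha hb
      have ha' : Qr a a' ∧ Qr a' a := ha
      have hb' : Qr b b' ∧ Qr b' b := hb
      refine propext ⟨fun hq => hQrtrans _ _ _ (hQrtrans _ _ _ ha'.2 hq) hb'.1,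
        fun hq => hQrtrans _ _ _ (hQrtrans _ _ _ ha'.1 hq) hb'.2⟩)
  haveI : IsPartialOrder (Quotient s) Qq :=
    { refl := fun q => Quotient.inductionOn q fun a => hQrrefl a
      trans := fun q1 q2 q3 => Quotient.inductionOn₃ q1 q2 q3
        fun a b c h1 h2 => hQrtrans a b c h1 h2
      antisymm := fun q1 q2 => Quotient.inductionOn₂ q1 q2
        fun a b h1 h2 => Quotient.sound ⟨h1, h2⟩ }
  obtain ⟨t, htlin, hts⟩ := extend_partialOrder Qq
  refine ⟨fun a b => t ⟦a⟧ ⟦b⟧, ⟨⟨fun a b => htlin.total _ _,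
    fun a b c h1 h2 => htlin.trans _ _ _ h1 h2⟩, ?_⟩, ?_⟩
  · -- upper bound
    intro R hR x' y' hle
    have hQrxy : R x' y' → Qr x' y' :=
      fun hr => Relation.ReflTransGen.single (Or.inl ⟨hle, R, hR, hr⟩)
    constructor
    · intro hr
      exact hts _ _ (show Qq ⟦x'⟧ ⟦y'⟧ from hQrxy hr)
    · intro hs
      refine ⟨hts _ _ (show Qq ⟦x'⟧ ⟦y'⟧ from hQrxy hs.1), fun hrev => ?_⟩
      have hnot : ¬ Qr y' x' := key x' y' hle ⟨R, hR, hs⟩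
      have hne : (⟦x'⟧ : Quotient s) = ⟦y'⟧ :=
        htlin.antisymm _ _ (hts _ _ (show Qq ⟦x'⟧ ⟦y'⟧ from hQrxy hs.1)) hrev
      have := Quotient.exact hne
      exact hnot this.2
  · -- y ⪰'' x
    exact hts _ _ (show Qq ⟦y⟧ ⟦x⟧ from Relation.ReflTransGen.single (Or.inr ⟨rfl, rfl⟩))
end

section
/- If the partial order ≿ on X contains a crown, then there exists a pair of preferences on X that possesses no minimum upper bound with respect to single-crossing dominance. -/
variable {X : Type*}

/-- A `K`-crown (K ≥ 4 even) for the relation `le`, indexed by `1,…,K` with the cyclic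
convention `a (K+1) = a 1`: non-adjacent elements are incomparable, and
`a (k-1) > a k < a (k+1)` for each even `k` with `1 < k ≤ K`. -/
def IsCrown (le : X → X → Prop) (K : ℕ) (a : ℕ → X) : Prop :=
  4 ≤ K ∧ Even K ∧
  (∀ k k', 1 ≤ k → k + 2 ≤ k' → k' ≤ K → ¬(k = 1 ∧ k' = K) →
    ¬ le (a k) (a k') ∧ ¬ le (a k') (a k)) ∧
  (∀ k, 1 < k → k ≤ K → Even k →
    (le (a k) (a (k - 1)) ∧ ¬ le (a (k - 1)) (a k)) ∧
    (le (a k) (a (if k = K then 1 else k + 1)) ∧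
      ¬ le (a (if k = K then 1 else k + 1)) (a k)))

/-- `le` contains no crowns. -/
def CrownFree (le : X → X → Prop) : Prop := ¬ ∃ K a, IsCrown le K a

/-- A diamond: `a ≥ b ≥ d`, `a ≥ c ≥ d`, with `b, c` incomparable. -/
def IsDiamond (le : X → X → Prop) (a b c d : X) : Prop :=
  le b a ∧ le d b ∧ le c a ∧ le d c ∧ ¬ le b c ∧ ¬ le c b

/-- `le` contains no diamonds. -/
def DiamondFree (le : X → X → Prop) : Prop := ¬ ∃ a b c d, IsDiamond le a b c d

/-!
Write the crown as `a₁ > a₂ < a₃ > ⋯ > a_K < a₁`, with the minima at the even positions. Both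
preferences come from utilities supported on the crown: `R₁` (`descendingUtility`) strictly
prefers the top of every descending edge `a_{2i-1} > a_{2i}` except the last one, `R₂`
(`lastDropUtility`) only that of the last one, and both are indifferent along every ascending
edge `a_{2i} < a_{2i+1}` (indices mod `K`). As the only comparabilities among crown elements are
its edges, every upper bound strictly prefers `a_{2i-1}` to `a_{2i}`, while for each ascending
edge some upper bound is indifferent on it (`flatAtUtility`). A minimum upper bound is dominated
by all of these, so it weakly prefers `a_{2i}` to `a_{2i+1}` for every `i`, and going once around
the crown gives `a₂ ≿ a₁ ≻ a₂`.
-/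

open Set Function

section UtilityPref

variable {ι α : Type*}

def utilityPref [LinearOrder α] (u : X → α) : X → X → Prop := fun x y => u y ≤ u x

lemma isPref_utilityPref [LinearOrder α] (u : X → α) : IsPref (utilityPref u) :=
  ⟨fun x y => le_total (u y) (u x), fun _ _ _ hxy hyz => hyz.trans hxy⟩

lemma sPref_utilityPref [LinearOrder α] {u : X → α} {x y : X} :
    SPref (utilityPref u) x y ↔ u y < u x :=
  lt_iff_le_not_ge.symm

lemma sc_utilityPref_iff [PartialOrder X] [LinearOrder α] {u v : X → α} :
    SC (utilityPref v) (utilityPref u) ↔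
      ∀ x y, y ≤ x → (u y ≤ u x → v y ≤ v x) ∧ (u y < u x → v y < v x) := by
  simp only [SC, sPref_utilityPref, utilityPref]

noncomputable def liftUtility (s : Set ι) (a : ι → X) (f : ι → ℕ) : X → ℕ :=
  extend (s.domRestrict a) (s.domRestrict f) 0

variable {s : Set ι} {a : ι → X}

lemma liftUtility_apply (ha : InjOn a s) (f : ι → ℕ) {k : ι} (hk : k ∈ s) :
    liftUtility s a f (a k) = f k :=
  ha.injective.extend_apply (s.domRestrict f) 0 ⟨k, hk⟩

lemma liftUtility_eq_zero (f : ι → ℕ) {x : X} (hx : x ∉ a '' s) : liftUtility s a f x = 0 :=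
  extend_apply' _ _ _ fun ⟨⟨k, hk⟩, hkx⟩ => hx ⟨k, hk, hkx⟩

lemma sc_utilityPref_liftUtility [PartialOrder X] (ha : InjOn a s) {f g : ι → ℕ}
    (hf : ∀ k ∈ s, 0 < f k) (hg : ∀ k ∈ s, 0 < g k)
    (h : ∀ j ∈ s, ∀ l ∈ s, a l ≤ a j → (f l ≤ f j → g l ≤ g j) ∧ (f l < f j → g l < g j)) :
    SC (utilityPref (liftUtility s a g)) (utilityPref (liftUtility s a f)) := by
  rw [sc_utilityPref_iff]
  intro x y hyx
  by_cases hx : x ∈ a '' s <;> by_cases hy : y ∈ a '' s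
  · obtain ⟨j, hj, rfl⟩ := hx
    obtain ⟨l, hl, rfl⟩ := hy
    simpa only [liftUtility_apply ha _ hj, liftUtility_apply ha _ hl] using h j hj l hl hyx
  · obtain ⟨j, hj, rfl⟩ := hx
    simp only [liftUtility_apply ha _ hj, liftUtility_eq_zero _ hy]
    exact ⟨fun _ => Nat.zero_le _, fun _ => hg j hj⟩
  · obtain ⟨l, hl, rfl⟩ := hy
    simp only [liftUtility_apply ha _ hl, liftUtility_eq_zero _ hx]
    have := hf l hl
    constructor <;> intro <;> omega
  · simp only [liftUtility_eq_zero _ hx, liftUtility_eq_zero _ hy]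
    exact ⟨fun _ => le_rfl, fun h0 => absurd h0 (lt_irrefl 0)⟩

end UtilityPref

def crownNext (K k : ℕ) : ℕ := if k = K then 1 else k + 1

namespace IsCrown

variable [PartialOrder X] {K : ℕ} {a : ℕ → X}

lemma four_le (hc : IsCrown (· ≤ ·) K a) : 4 ≤ K := hc.1

lemma even (hc : IsCrown (· ≤ ·) K a) : Even K := hc.2.1

lemma lt_pred (hc : IsCrown (· ≤ ·) K a) {k : ℕ} (hk : Even k) (h1 : 1 < k) (hK : k ≤ K) :
    a k < a (k - 1) :=
  lt_of_le_not_ge (hc.2.2.2 k h1 hK hk).1.1 (hc.2.2.2 k h1 hK hk).1.2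

lemma lt_next (hc : IsCrown (· ≤ ·) K a) {k : ℕ} (hk : Even k) (h1 : 1 < k) (hK : k ≤ K) :
    a k < a (crownNext K k) :=
  lt_of_le_not_ge (hc.2.2.2 k h1 hK hk).2.1 (hc.2.2.2 k h1 hK hk).2.2

lemma adjacent_of_comparable (hc : IsCrown (· ≤ ·) K a) {j l : ℕ} (hj : 1 ≤ j) (hjl : j < l)
    (hl : l ≤ K) (hle : a j ≤ a l ∨ a l ≤ a j) : l = j + 1 ∨ (j = 1 ∧ l = K) := by
  by_contra hne
  have := hc.2.2.1 j l hj (by omega) hl (by tauto)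
  tauto

lemma eq_or_edge_of_le (hc : IsCrown (· ≤ ·) K a) {j l : ℕ} (hj : j ∈ Icc 1 K)
    (hl : l ∈ Icc 1 K) (hle : a l ≤ a j) :
    j = l ∨ (Even l ∧ 1 < l ∧ (j = l - 1 ∨ j = crownNext K l)) := by
  obtain ⟨hj1, hjK⟩ := hj
  obtain ⟨hl1, hlK⟩ := hl
  rcases lt_trichotomy j l with hjl | rfl | hlj
  · rcases hc.adjacent_of_comparable hj1 hjl hlK (Or.inr hle) with rfl | ⟨rfl, rfl⟩
    · by_cases he : Even (j + 1)
      · exact Or.inr ⟨he, by omega, Or.inl rfl⟩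
      · have hje : Even j := by simpa [Nat.even_add_one] using he
        have hj2 : 1 < j := by rw [Nat.even_iff] at hje; omega
        have := hc.lt_next hje hj2 (by omega)
        rw [crownNext, if_neg (by omega)] at this
        exact absurd hle this.not_ge
    · exact Or.inr ⟨hc.even, by omega, Or.inr (by simp [crownNext])⟩
  · exact Or.inl rfl
  · rcases hc.adjacent_of_comparable hl1 hlj hjK (Or.inl hle) with rfl | ⟨rfl, rfl⟩
    · by_cases he : Even l
      · have hl2 : 1 < l := by rw [Nat.even_iff] at he; omega
        exact Or.inr ⟨he, hl2, Or.inr (by rw [crownNext, if_neg (by omega)])⟩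
      · have hje : Even (l + 1) := by simpa [Nat.even_add_one] using he
        have := hc.lt_pred hje (by omega) hjK
        exact absurd hle (by simpa using this.not_ge)
    · have := hc.lt_next hc.even (by omega) le_rfl
      rw [crownNext, if_pos rfl] at this
      exact absurd hle this.not_ge

lemma injOn (hc : IsCrown (· ≤ ·) K a) : InjOn a (Icc 1 K) := by
  intro j hj l hl hjl
  rcases hc.eq_or_edge_of_le hj hl hjl.ge with h | ⟨hl2, -, hjl'⟩
  · exact h
  rcases hc.eq_or_edge_of_le hl hj hjl.le with h | ⟨hj2, -, -⟩
  · exact h.symm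
  rw [Nat.even_iff] at hl2 hj2
  unfold crownNext at hjl'
  split_ifs at hjl' <;> omega

end IsCrown

noncomputable def crownPref (K : ℕ) (a : ℕ → X) (f : ℕ → ℕ) : X → X → Prop :=
  utilityPref (liftUtility (Icc 1 K) a f)

def descendingUtility (K k : ℕ) : ℕ := if k = K then K else K - k / 2

def lastDropUtility (K k : ℕ) : ℕ := if k = 1 ∨ k = K then 1 else 2

def flatAtUtility (c k : ℕ) : ℕ := if k = c - 1 then 3 else if k = c ∨ k % 2 = 1 then 2 else 1

def crownPair (K : ℕ) (a : ℕ → X) : Set (X → X → Prop) :=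
  {crownPref K a (descendingUtility K), crownPref K a (lastDropUtility K)}

namespace IsCrown

variable [PartialOrder X] {K : ℕ} {a : ℕ → X}

lemma sPref_crownPref_iff (hc : IsCrown (· ≤ ·) K a) (f : ℕ → ℕ) {j l : ℕ} (hj : j ∈ Icc 1 K)
    (hl : l ∈ Icc 1 K) : SPref (crownPref K a f) (a j) (a l) ↔ f l < f j := by
  rw [crownPref, sPref_utilityPref, liftUtility_apply hc.injOn f hj,
    liftUtility_apply hc.injOn f hl]

lemma sc_crownPref (hc : IsCrown (· ≤ ·) K a) {f g : ℕ → ℕ} (hf : ∀ k ∈ Icc 1 K, 0 < f k)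
    (hg : ∀ k ∈ Icc 1 K, 0 < g k)
    (hleft : ∀ l, Even l → 1 < l → l ≤ K → g l < g (l - 1))
    (hright : ∀ l, Even l → 1 < l → l ≤ K → f (crownNext K l) = f l ∧ g l ≤ g (crownNext K l)) :
    SC (crownPref K a g) (crownPref K a f) :=
  sc_utilityPref_liftUtility hc.injOn hf hg fun j hj l hl hle => by
    rcases hc.eq_or_edge_of_le hj hl hle with rfl | ⟨hev, h1, rfl | rfl⟩
    · exact ⟨fun _ => le_rfl, fun h => absurd h (lt_irrefl _)⟩
    · have := hleft l hev h1 hl.2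
      exact ⟨fun _ => this.le, fun _ => this⟩
    · obtain ⟨hfl, hgl⟩ := hright l hev h1 hl.2
      exact ⟨fun _ => hgl, fun h => by omega⟩

lemma sPref_pred_of_isUB (hc : IsCrown (· ≤ ·) K a) {R : X → X → Prop}
    (hR : IsUB (crownPair K a) R) {l : ℕ} (hl : Even l) (h1 : 1 < l) (hK : l ≤ K) :
    SPref R (a (l - 1)) (a l) := by
  have hl' : l % 2 = 0 := Nat.even_iff.mp hl
  have hmem : l - 1 ∈ Icc 1 K ∧ l ∈ Icc 1 K := ⟨⟨by omega, by omega⟩, ⟨by omega, hK⟩⟩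
  have hle := (hc.lt_pred hl h1 hK).le
  by_cases hlK : l = K
  · refine ((hR.2 _ (mem_insert_of_mem _ rfl)) _ _ hle).2 ?_
    rw [hc.sPref_crownPref_iff _ hmem.1 hmem.2, lastDropUtility, lastDropUtility]
    have := hc.four_le
    split_ifs <;> omega
  · refine ((hR.2 _ (mem_insert _ _)) _ _ hle).2 ?_
    rw [hc.sPref_crownPref_iff _ hmem.1 hmem.2, descendingUtility, descendingUtility]
    split_ifs <;> omega

lemma isUB_flatAt (hc : IsCrown (· ≤ ·) K a) {c : ℕ} (hc2 : Even c) (hc1 : 1 < c) :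
    IsUB (crownPair K a) (crownPref K a (flatAtUtility c)) := by
  have hK := hc.four_le
  have hKe := Nat.even_iff.mp hc.even
  rw [Nat.even_iff] at hc2
  have hpos : ∀ k ∈ Icc 1 K, 0 < flatAtUtility c k := fun k _ => by
    unfold flatAtUtility; split_ifs <;> omega
  have hleft : ∀ l, Even l → 1 < l → l ≤ K → flatAtUtility c l < flatAtUtility c (l - 1) := by
    intro l hl _ _
    rw [Nat.even_iff] at hl
    unfold flatAtUtility
    split_ifs <;> omega
  have hright : ∀ l, Even l → 1 < l → l ≤ K →
      flatAtUtility c l ≤ flatAtUtility c (crownNext K l) := by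
    intro l hl _ _
    rw [Nat.even_iff] at hl
    unfold flatAtUtility crownNext
    split_ifs <;> omega
  refine ⟨isPref_utilityPref _, ?_⟩
  rintro R (rfl | rfl)
  · refine hc.sc_crownPref ?_ ?_ hleft fun l hl h1 hlK => ⟨?_, hright l hl h1 hlK⟩
    · intro k hk
      rw [mem_Icc] at hk
      unfold descendingUtility
      split_ifs <;> omega
    · exact hpos
    · rw [Nat.even_iff] at hl
      unfold descendingUtility crownNext
      split_ifs <;> omega
  · refine hc.sc_crownPref ?_ ?_ hleft fun l hl h1 hlK => ⟨?_, hright l hl h1 hlK⟩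
    · exact fun k _ => by unfold lastDropUtility; split_ifs <;> omega
    · exact hpos
    · rw [Nat.even_iff] at hl
      unfold lastDropUtility crownNext
      split_ifs <;> omega

lemma rel_next_of_isMUB (hc : IsCrown (· ≤ ·) K a) {R : X → X → Prop}
    (hR : IsMUB (crownPair K a) R) {l : ℕ} (hl : Even l) (h1 : 1 < l) (hK : l ≤ K) :
    R (a l) (a (crownNext K l)) := by
  by_contra hn
  have hs : SPref R (a (crownNext K l)) (a l) := ⟨(hR.1.1.1 _ _).resolve_left hn, hn⟩
  have hflat := ((hR.2 _ (hc.isUB_flatAt hl h1)) _ _ (hc.lt_next hl h1 hK).le).2 hs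
  have hnext : crownNext K l ∈ Icc 1 K := by
    unfold crownNext; split_ifs <;> constructor <;> omega
  rw [hc.sPref_crownPref_iff _ hnext ⟨by omega, hK⟩] at hflat
  have := hc.four_le
  rw [Nat.even_iff] at hl
  revert hflat
  unfold flatAtUtility crownNext
  split_ifs <;> omega

lemma not_isMUB (hc : IsCrown (· ≤ ·) K a) (R : X → X → Prop) :
    ¬ IsMUB (crownPair K a) R := by
  intro hR
  have hK := hc.four_le
  have hstep : ∀ i, 2 ≤ i → i < K → R (a i) (a (i + 1)) := by
    intro i h2 hiK
    by_cases hi : Even i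
    · simpa [crownNext, hiK.ne] using hc.rel_next_of_isMUB hR hi (by omega) hiK.le
    · have hi' : Even (i + 1) := by simpa [Nat.even_add_one] using hi
      simpa using (hc.sPref_pred_of_isUB hR.1 hi' (by omega) hiK).1
  have hchain : ∀ n, 2 ≤ n → n ≤ K → R (a 2) (a n) :=
    Nat.le_induction (fun _ => (hR.1.1.1 _ _).elim id id)
      fun n h2 ih hn => hR.1.1.2 (ih (by omega)) (hstep n h2 (by omega))
  have hK1 : R (a K) (a 1) := by
    simpa [crownNext] using hc.rel_next_of_isMUB hR hc.even (by omega) le_rfl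
  exact (hc.sPref_pred_of_isUB hR.1 even_two one_lt_two (by omega)).2
    (hR.1.1.2 (hchain K (by omega) le_rfl) hK1)

end IsCrown

theorem crown_no_mub_general (X : Type*) [PartialOrder X]
    (h : ∃ K a, IsCrown (· ≤ · : X → X → Prop) K a) :
    ∃ R1 R2 : X → X → Prop, IsPref R1 ∧ IsPref R2 ∧
      ¬ ∃ Rs : X → X → Prop, IsMUB {R1, R2} Rs := by
  obtain ⟨K, a, hc⟩ := h
  exact ⟨_, _, isPref_utilityPref _, isPref_utilityPref _, fun ⟨R, hR⟩ => hc.not_isMUB R hR⟩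

/-- If the partial order contains a crown, then some pair of preferences has no minimum
upper bound w.r.t. single-crossing dominance. -/
theorem crown_no_mub (X : Type*) [Nonempty X] [PartialOrder X]
    (h : ∃ K a, IsCrown (· ≤ · : X → X → Prop) K a) :
    ∃ R1 R2 : X → X → Prop, IsPref R1 ∧ IsPref R2 ∧
      ¬ ∃ Rs : X → X → Prop, IsMUB {R1, R2} Rs :=
  crown_no_mub_general X h
end

section
/- If the partial order ≿ on X contains a diamond, then there exists a pair of preferences on X that possesses no minimum upper bound with respect to single-crossing dominance. -/
variable {X : Type*}

/-- If the partial order contains a diamond, then some pair of preferences has no minimum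
upper bound w.r.t. single-crossing dominance. -/
theorem diamond_no_mub (X : Type*) [Nonempty X] [PartialOrder X]
    (h : ∃ a b c d : X, IsDiamond (· ≤ ·) a b c d) :
    ∃ R1 R2 : X → X → Prop, IsPref R1 ∧ IsPref R2 ∧
      ¬ ∃ Rs : X → X → Prop, IsMUB {R1, R2} Rs := by
  classical
  obtain ⟨a, b, c, d, hba, hdb, hca, hdc, hbc, hcb⟩ := h
  set R1 : X → X → Prop := fun _ _ => True with hR1
  set R2 : X → X → Prop := fun x y => y = c → x = c with hR2
  have hdnec : d ≠ c := by
    intro h; apply hcb; rw [← h]; exact hdb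
  refine ⟨R1, R2, ⟨fun _ _ => Or.inl trivial, fun _ _ _ _ _ => trivial⟩,
    ⟨fun x y => by by_cases hx : x = c <;> by_cases hy : y = c <;> tauto,
     fun x y z h1 h2 hz => h1 (h2 hz)⟩, ?_⟩
  rintro ⟨Rs, ⟨⟨hPs, hdom⟩, hmin⟩⟩
  have h1 : SC Rs R1 := hdom R1 (Set.mem_insert _ _)
  have h2 : SC Rs R2 := hdom R2 (Set.mem_insert_of_mem _ rfl)
  have hRsw : ∀ x y : X, y ≤ x → Rs x y := fun x y h => (h1 x y h).1 trivial
  -- Rs strictly prefers c to d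
  have hcd : SPref Rs c d := (h2 c d hdc).2 ⟨fun _ => rfl, fun h => hdnec (h rfl)⟩
  -- the upper bound R'' given by the indicator of {x | c ≤ x}
  set R'' : X → X → Prop := fun x y => c ≤ y → c ≤ x with hR''
  have hUB'' : IsUB {R1, R2} R'' := by
    refine ⟨⟨fun x y => by by_cases hx : c ≤ x <;> by_cases hy : c ≤ y <;> tauto,
      fun x y z h1 h2 hz => h1 (h2 hz)⟩, ?_⟩
    rintro R hR
    rcases hR with hR | hR
    · subst hR
      intro x y hxy
      exact ⟨fun _ hcy => le_trans hcy hxy, fun hs => absurd trivial hs.2⟩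
    · simp only [Set.mem_singleton_iff] at hR
      subst hR
      intro x y hxy
      refine ⟨fun _ hcy => le_trans hcy hxy, ?_⟩
      rintro ⟨hxy2, hn⟩
      have hx : x = c := by by_contra hx; exact hn (fun h => absurd h hx)
      have hy : y ≠ c := fun hy => hn (fun _ => hy)
      refine ⟨fun _ => hx.ge, ?_⟩
      intro hcy
      exact hy (le_antisymm (hxy.trans hx.le) (hcy hx.ge))
  -- Rs cannot strictly prefer b to d, hence Rs d b
  have hnbd : ¬ SPref Rs b d := by
    intro hs
    exact ((hmin R'' hUB'' b d hdb).2 hs).2 (fun h => absurd h hcb)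
  have hRsdb : Rs d b := by
    by_contra hn
    exact hnbd ⟨hRsw b d hdb, hn⟩
  -- Rs strictly prefers a to b
  have hnba : ¬ Rs b a := by
    intro hba'
    have h3 : Rs b c := hPs.2 hba' (hRsw a c hca)
    have h4 : Rs d c := hPs.2 hRsdb h3
    exact hcd.2 h4
  have hsab : SPref Rs a b := ⟨hRsw a b hba, hnba⟩
  -- the upper bound S3 given by the indicator of the upper set of {b, c}
  set S3 : X → X → Prop := fun x y => (b ≤ y ∨ c ≤ y) → (b ≤ x ∨ c ≤ x) with hS3
  have hUBS3 : IsUB {R1, R2} S3 := by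
    refine ⟨⟨fun x y => by
        by_cases hx : b ≤ x ∨ c ≤ x <;> by_cases hy : b ≤ y ∨ c ≤ y <;> tauto,
      fun x y z h1 h2 hz => h1 (h2 hz)⟩, ?_⟩
    rintro R hR
    have hweak : ∀ x y : X, y ≤ x → S3 x y := by
      intro x y hxy hy
      exact hy.imp (fun h => le_trans h hxy) (fun h => le_trans h hxy)
    rcases hR with hR | hR
    · subst hR
      intro x y hxy
      exact ⟨fun _ => hweak x y hxy, fun hs => absurd trivial hs.2⟩
    · simp only [Set.mem_singleton_iff] at hR
      subst hR
      intro x y hxy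
      refine ⟨fun _ => hweak x y hxy, ?_⟩
      rintro ⟨hxy2, hn⟩
      have hx : x = c := by by_contra hx; exact hn (fun h => absurd h hx)
      have hy : y ≠ c := fun hy => hn (fun _ => hy)
      refine ⟨fun _ => Or.inr hx.ge, ?_⟩
      intro hS
      rcases hS (Or.inr hx.ge) with hby | hcy
      · exact hbc (le_trans hby (hxy.trans hx.le))
      · exact hy (le_antisymm (hxy.trans hx.le) hcy)
  -- contradiction: S3 must strictly prefer a to b, but it does not
  exact ((hmin S3 hUBS3 a b hba).2 hsab).2 (fun _ => Or.inl (le_refl b))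
end

section
/- If the partial order ≿ on X is crown-free and diamond-free, then every set P of preferences on X possesses a minimum upper bound with respect to single-crossing dominance. -/
/-!
For comparable `y ≤ x`, every upper bound must rank `x` weakly above `y` when a chain of
one-step demands `x = u₀ ≥ u₁ ≥ ⋯ ≥ uₖ = y` (each `uᵢ ⪰ uᵢ₊₁` for some member of `P`) leads from
`x` down to `y`, and strictly above when such a chain contains a strict demand. The candidate
minimum upper bound ranks the larger element of each comparable pair no higher than these
demands force (`Prescribed`).

Diamond-freeness makes every interval a chain, so a demand chain can be split at any point of
the interval it spans; this makes `Prescribed` transitive along comparable triples.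
Crown-freeness then shows that `Prescribed` agrees with its transitive closure on comparable
pairs: a shortest path violating this has no comparable shortcuts, so it closes up into a
chordless cycle of the comparability graph, i.e. a crown. Any total preorder extending that
closure without creating new ties is therefore the minimum upper bound.
-/

variable {X : Type*}

open Relation

section Paths

variable {α : Type*} {r : α → α → Prop}

theorem Relation.ReflTransGen.exists_path {a b : α} (h : ReflTransGen r a b) :
    ∃ (n : ℕ) (p : ℕ → α), p 0 = a ∧ p n = b ∧ ∀ i < n, r (p i) (p (i + 1)) := by
  induction h with
  | refl => exact ⟨0, fun _ => a, rfl, rfl, by simp⟩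
  | @tail b c _ hbc ih =>
    obtain ⟨n, p, h0, hn, hp⟩ := ih
    refine ⟨n + 1, Function.update p (n + 1) c, by simpa using h0, by simp, fun i hi => ?_⟩
    rcases Nat.lt_succ_iff_lt_or_eq.mp hi with hi | rfl
    · rw [Function.update_of_ne (by omega), Function.update_of_ne (by omega)]
      exact hp i hi
    · simpa [hn] using hbc

theorem exists_path_of_shortcut {p : ℕ → α} {n i j : ℕ} (hp : ∀ k < n, r (p k) (p (k + 1)))
    (hij : i < j) (hjn : j ≤ n) (hr : r (p i) (p j)) :
    ∃ q : ℕ → α, q 0 = p 0 ∧ q (n + i + 1 - j) = p n ∧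
      ∀ k < n + i + 1 - j, r (q k) (q (k + 1)) := by
  refine ⟨fun k => if k ≤ i then p k else p (k + j - i - 1), by simp, ?_, fun k hk => ?_⟩
  · simp only [show ¬ n + i + 1 - j ≤ i by omega, if_false]
    congr 1
    omega
  · by_cases hki : k < i
    · simpa [hki.le, show k + 1 ≤ i by omega] using hp k (by omega)
    by_cases hki' : k = i
    · subst hki'
      simpa [show k + 1 + j - k - 1 = j by omega] using hr
    · simp only [show ¬ k ≤ i by omega, show ¬ k + 1 ≤ i by omega, if_false]
      rw [show k + 1 + j - i - 1 = k + j - i - 1 + 1 by omega]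
      exact hp _ (by omega)

end Paths

section Cycles

variable {α : Type*} [PartialOrder α]

structure IsChordlessCycle (N : ℕ) (q : ℕ → α) : Prop where
  four_le : 4 ≤ N
  periodic : Function.Periodic q N
  symmGen_succ : ∀ i, SymmGen (· ≤ ·) (q i) (q (i + 1))
  incompRel_add : ∀ i d, 2 ≤ d → d + 2 ≤ N → IncompRel (· ≤ ·) (q i) (q (i + d))

namespace IsChordlessCycle

variable {N : ℕ} {q : ℕ → α}

theorem shift (hq : IsChordlessCycle N q) (t : ℕ) : IsChordlessCycle N (fun i => q (i + t)) where
  four_le := hq.four_le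
  periodic i := by simpa [add_right_comm] using hq.periodic (i + t)
  symmGen_succ i := by simpa [add_right_comm] using hq.symmGen_succ (i + t)
  incompRel_add i d hd hdN := by simpa [add_right_comm] using hq.incompRel_add (i + t) d hd hdN

theorem lt_or_gt (hq : IsChordlessCycle N q) (i : ℕ) : q i < q (i + 1) ∨ q (i + 1) < q i := by
  have hne : q i ≠ q (i + 1) := by
    intro h
    have h2 := hq.incompRel_add i 2 le_rfl (by linarith [hq.four_le])
    rcases hq.symmGen_succ (i + 1) with h' | h'
    · exact h2.not_le (h ▸ h')
    · exact h2.not_ge (h ▸ h')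
  rcases hq.symmGen_succ i with h | h
  · exact Or.inl (h.lt_of_ne hne)
  · exact Or.inr (h.lt_of_ne hne.symm)

theorem lt_succ_succ (hq : IsChordlessCycle N q) {i : ℕ} (h : q (i + 1) < q i) :
    q (i + 1) < q (i + 2) :=
  (hq.lt_or_gt (i + 1)).resolve_right fun h' =>
    (hq.incompRel_add i 2 le_rfl (by linarith [hq.four_le])).not_ge (h'.trans h).le

theorem succ_succ_lt (hq : IsChordlessCycle N q) {i : ℕ} (h : q i < q (i + 1)) :
    q (i + 2) < q (i + 1) :=
  (hq.lt_or_gt (i + 1)).resolve_left fun h' =>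
    (hq.incompRel_add i 2 le_rfl (by linarith [hq.four_le])).not_le (h.trans h').le

theorem exists_isCrown (hq : IsChordlessCycle N q) : ∃ K a, IsCrown (· ≤ · : α → α → Prop) K a := by
  wlog h10 : q 1 < q 0 generalizing q
  · exact this (hq.shift 1) (hq.succ_succ_lt ((hq.lt_or_gt 0).resolve_right h10))
  have hzigzag : ∀ m, q (2 * m + 1) < q (2 * m) ∧ q (2 * m + 1) < q (2 * m + 2) := by
    intro m
    induction m with
    | zero => exact ⟨h10, hq.lt_succ_succ h10⟩
    | succ m ih =>
      have h : q (2 * (m + 1) + 1) < q (2 * (m + 1)) := hq.succ_succ_lt ih.2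
      exact ⟨h, hq.lt_succ_succ h⟩
  have hN : Even N := by
    by_contra hodd
    obtain ⟨m, hm⟩ := Nat.not_even_iff_odd.mp hodd
    have h01 := (hzigzag m).2
    rw [← hm, show 2 * m + 2 = 1 + N by omega, hq.periodic, ← zero_add N, hq.periodic] at h01
    exact h01.not_gt h10
  refine ⟨N, fun k => q (k - 1), hq.four_le, hN, fun k k' hk hkk' hk'N hne => ?_,
    fun k hk hkN ⟨m, hm⟩ => ?_⟩
  · have h := hq.incompRel_add (k - 1) (k' - k) (by omega) (by omega)
    rwa [show k - 1 + (k' - k) = k' - 1 by omega] at h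
  · obtain ⟨hprev, hnext⟩ := hzigzag (m - 1)
    have hk1 : k - 1 = 2 * (m - 1) + 1 := by omega
    have hlt1 : q (k - 1) < q (k - 1 - 1) := by
      rwa [show k - 1 - 1 = 2 * (m - 1) by omega, hk1]
    have hlt2 : q (k - 1) < q ((if k = N then 1 else k + 1) - 1) := by
      split_ifs with hkN'
      · rwa [Nat.sub_self, ← hq.periodic 0, zero_add, ← hkN', hk1,
          show k = 2 * (m - 1) + 2 by omega]
      · rwa [show k + 1 - 1 = 2 * (m - 1) + 2 by omega, hk1]
    exact ⟨⟨hlt1.le, hlt1.not_ge⟩, hlt2.le, hlt2.not_ge⟩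

end IsChordlessCycle

end Cycles

section CrownFree

variable {α : Type*} [PartialOrder α]

theorem isChordlessCycle_mod_of_path {p : ℕ → α} {n : ℕ} (hn : 3 ≤ n)
    (hadj : ∀ i < n, SymmGen (· ≤ ·) (p i) (p (i + 1))) (hends : SymmGen (· ≤ ·) (p n) (p 0))
    (hinc : ∀ i j, i + 2 ≤ j → j ≤ n → ¬(i = 0 ∧ j = n) → IncompRel (· ≤ ·) (p i) (p j)) :
    IsChordlessCycle (n + 1) (fun k => p (k % (n + 1))) where
  four_le := by omega
  periodic k := by simp
  symmGen_succ k := by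
    simp only [← Nat.mod_add_mod k (n + 1) 1]
    have hk := Nat.mod_lt k n.succ_pos
    generalize k % (n + 1) = a at hk ⊢
    rcases Nat.lt_succ_iff_lt_or_eq.mp hk with ha | rfl
    · rw [Nat.mod_eq_of_lt (by omega)]
      exact hadj a ha
    · rw [Nat.mod_self]
      exact hends
  incompRel_add k d hd hdN := by
    simp only [← Nat.mod_add_mod k (n + 1) d]
    have hk := Nat.mod_lt k n.succ_pos
    generalize k % (n + 1) = a at hk ⊢
    by_cases had : a + d < n + 1
    · rw [Nat.mod_eq_of_lt had]
      exact hinc a (a + d) (by omega) (by omega) (by omega)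
    · rw [Nat.mod_eq_sub_mod (by omega), Nat.mod_eq_of_lt (by omega)]
      exact (hinc (a + d - (n + 1)) a (by omega) (by omega) (by omega)).symm

theorem CrownFree.rel_of_reflTransGen (hC : CrownFree (· ≤ · : α → α → Prop))
    {r : α → α → Prop} (hrefl : ∀ x, r x x) (hcomp : ∀ ⦃x y⦄, r x y → SymmGen (· ≤ ·) x y)
    (htrans : ∀ ⦃x y z⦄, r x y → r y z → SymmGen (· ≤ ·) x z → r x z)
    {x y : α} (h : ReflTransGen r x y) (hxy : SymmGen (· ≤ ·) x y) : r x y := by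
  obtain ⟨n, p, rfl, rfl, hp⟩ := h.exists_path
  clear h
  induction n using Nat.strong_induction_on generalizing p with
  | _ n ih =>
  rcases (show n ≤ 2 ∨ 3 ≤ n by omega) with hn | hn
  · interval_cases n
    · exact hrefl _
    · exact hp 0 one_pos
    · exact htrans (hp 0 (by omega)) (hp 1 (by omega)) hxy
  by_contra hne
  -- A comparable chord splits the path into two shorter ones, to which `ih` applies.
  have hinc : ∀ i j, i + 2 ≤ j → j ≤ n → ¬(i = 0 ∧ j = n) → IncompRel (· ≤ ·) (p i) (p j) := by
    intro i j hij hjn hij0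
    rw [← not_symmGen_iff]
    intro hc
    have hpij : r (p i) (p j) := by
      have h := ih (j - i) (by omega) (fun k => p (i + k))
        (fun k hk => by simpa [add_assoc] using hp (i + k) (by omega))
        (by simpa [show i + (j - i) = j by omega] using hc)
      simpa [show i + (j - i) = j by omega] using h
    obtain ⟨q, hq0, hqn, hq⟩ := exists_path_of_shortcut hp (by omega) hjn hpij
    exact hne (hq0 ▸ hqn ▸ ih _ (by omega) q hq (hq0 ▸ hqn ▸ hxy))
  exact hC (isChordlessCycle_mod_of_path hn (fun i hi => hcomp (hp i hi)) hxy.symm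
    hinc).exists_isCrown

end CrownFree

theorem DiamondFree.isChain_Icc {α : Type*} [PartialOrder α]
    (hD : DiamondFree (· ≤ · : α → α → Prop)) (a b : α) : IsChain (· ≤ ·) (Set.Icc a b) := by
  intro x hx y hy _
  by_contra! hxy
  exact hD ⟨b, x, y, a, hx.2, hx.1, hy.2, hy.1, hxy.1, hxy.2⟩

theorem exists_isPref_extension {α : Type*} (r : α → α → Prop) [IsPreorder α r] :
    ∃ s : α → α → Prop, IsPref s ∧ ∀ a b, r a b → s a b ∧ (¬ r b a → ¬ s b a) := by
  let _ : Preorder α := { le := r, le_refl := refl_of r, le_trans := fun _ _ _ => trans_of r }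
  let f : α → LinearExtension (Antisymmetrization α (· ≤ ·)) :=
    fun a => toLinearExtension (toAntisymmetrization (· ≤ ·) a)
  have hf : Monotone f := fun a b hab =>
    toLinearExtension.monotone (toAntisymmetrization_le_toAntisymmetrization_iff.mpr hab)
  have hf' : StrictMono f := fun a b hab =>
    (toLinearExtension.monotone.strictMono_of_injective fun _ _ h => h)
      (toAntisymmetrization_lt_toAntisymmetrization_iff.mpr hab)
  exact ⟨fun a b => f a ≤ f b, ⟨fun a b => le_total _ _, fun a b c => le_trans⟩,
    fun a b hab => ⟨hf hab, fun hba => (hf' (lt_of_le_not_ge hab hba)).not_ge⟩⟩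

namespace IsPref

variable {X : Type*} {R : X → X → Prop}

theorem spref_or_spref_or_and (hR : IsPref R) {x z : X} (hxz : R x z) (y : X) :
    SPref R x y ∨ SPref R y z ∨ (R x y ∧ R y z) := by
  by_cases hyx : R y x
  · by_cases hxy : R x y
    · exact Or.inr (Or.inr ⟨hxy, hR.2 hyx hxz⟩)
    · exact Or.inr (Or.inl ⟨hR.2 hyx hxz, fun hzy => hxy (hR.2 hxz hzy)⟩)
  · exact Or.inl ⟨(hR.1 x y).resolve_right hyx, hyx⟩

theorem spref_or_spref (hR : IsPref R) {x z : X} (hxz : SPref R x z) (y : X) :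
    SPref R x y ∨ SPref R y z := by
  by_cases hyx : R y x
  · exact Or.inr ⟨hR.2 hyx hxz.1, fun hzy => hxz.2 (hR.2 hzy hyx)⟩
  · exact Or.inl ⟨(hR.1 x y).resolve_right hyx, hyx⟩

end IsPref

namespace SingleCrossing

variable {Y : Type*} [PartialOrder Y] (P : Set (Y → Y → Prop))

def ForcedStep (x y : Y) : Prop := y ≤ x ∧ ∃ R ∈ P, R x y

def StrictForcedStep (x y : Y) : Prop := y ≤ x ∧ ∃ R ∈ P, SPref R x y

def ForcedWeak : Y → Y → Prop := ReflTransGen (ForcedStep P)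

def ForcedStrict (x y : Y) : Prop :=
  ∃ u v, ForcedWeak P x u ∧ StrictForcedStep P u v ∧ ForcedWeak P v y

def Prescribed (x y : Y) : Prop :=
  (y ≤ x ∧ ForcedWeak P x y) ∨ (x ≤ y ∧ ¬ ForcedStrict P y x)

variable {P} {x y z : Y}

theorem ForcedWeak.le (h : ForcedWeak P x y) : y ≤ x := by
  induction h with
  | refl => exact le_rfl
  | tail _ hstep ih => exact hstep.1.trans ih

theorem StrictForcedStep.forcedStrict (h : StrictForcedStep P x y) : ForcedStrict P x y :=
  ⟨x, y, .refl, h, .refl⟩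

theorem ForcedStrict.forcedWeak (h : ForcedStrict P x y) : ForcedWeak P x y := by
  obtain ⟨u, v, hxu, ⟨hvu, R, hR, hRuv⟩, hvy⟩ := h
  exact hxu.trans (.head ⟨hvu, R, hR, hRuv.1⟩ hvy)

theorem ForcedStrict.lt (h : ForcedStrict P x y) : y < x := by
  obtain ⟨u, v, hxu, ⟨hvu, R, -, hRuv⟩, hvy⟩ := h
  have hne : v ≠ u := by
    rintro rfl
    exact hRuv.2 hRuv.1
  exact hvy.le.trans_lt ((hvu.lt_of_ne hne).trans_le hxu.le)

theorem ForcedWeak.trans_forcedStrict (hxy : ForcedWeak P x y) (hyz : ForcedStrict P y z) :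
    ForcedStrict P x z :=
  let ⟨u, v, hyu, huv, hvz⟩ := hyz
  ⟨u, v, hxy.trans hyu, huv, hvz⟩

theorem ForcedStrict.trans_forcedWeak (hxy : ForcedStrict P x y) (hyz : ForcedWeak P y z) :
    ForcedStrict P x z :=
  let ⟨u, v, hxu, huv, hvy⟩ := hxy
  ⟨u, v, hxu, huv, hvy.trans hyz⟩

theorem ForcedWeak.split (hP : ∀ R ∈ P, IsPref R) (hD : DiamondFree (· ≤ · : Y → Y → Prop))
    (h : ForcedWeak P x z) (hy : y ∈ Set.Icc z x) :
    ForcedStrict P x y ∨ ForcedStrict P y z ∨ (ForcedWeak P x y ∧ ForcedWeak P y z) := by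
  induction h with
  | refl =>
    obtain rfl := le_antisymm hy.2 hy.1
    exact Or.inr (Or.inr ⟨.refl, .refl⟩)
  | @tail b c hxb hbc ih =>
    obtain ⟨hcb, R, hR, hRbc⟩ := hbc
    rcases (hD.isChain_Icc c x).total hy ⟨hcb, ForcedWeak.le hxb⟩ with hyb | hby
    · rcases (hP R hR).spref_or_spref_or_and hRbc y with h | h | ⟨hby, hyc⟩
      · exact Or.inl ⟨b, y, hxb, ⟨hyb, R, hR, h⟩, .refl⟩
      · exact Or.inr (Or.inl (StrictForcedStep.forcedStrict ⟨hy.1, R, hR, h⟩))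
      · exact Or.inr (Or.inr ⟨hxb.tail ⟨hyb, R, hR, hby⟩, .single ⟨hy.1, R, hR, hyc⟩⟩)
    · rcases ih ⟨hby, hy.2⟩ with h | h | ⟨hxy, hyb⟩
      · exact Or.inl h
      · exact Or.inr (Or.inl (h.trans_forcedWeak (.single ⟨hcb, R, hR, hRbc⟩)))
      · exact Or.inr (Or.inr ⟨hxy, hyb.tail ⟨hcb, R, hR, hRbc⟩⟩)

theorem ForcedStrict.split (hP : ∀ R ∈ P, IsPref R) (hD : DiamondFree (· ≤ · : Y → Y → Prop))
    (h : ForcedStrict P x z) (hy : y ∈ Set.Icc z x) :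
    ForcedStrict P x y ∨ ForcedStrict P y z := by
  obtain ⟨u, v, hxu, huv, hvz⟩ := h
  obtain ⟨hvu, R, hR, hRuv⟩ := huv
  have hchain := hD.isChain_Icc z x
  have hu : u ∈ Set.Icc z x := ⟨hvz.le.trans hvu, hxu.le⟩
  have hv : v ∈ Set.Icc z x := ⟨hvz.le, hvu.trans hxu.le⟩
  rcases hchain.total hu hy with huy | hyu
  · rcases hxu.split hP hD ⟨huy, hy.2⟩ with h | h | ⟨-, h⟩
    · exact Or.inl h
    · exact Or.inr ⟨u, v, h.forcedWeak, ⟨hvu, R, hR, hRuv⟩, hvz⟩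
    · exact Or.inr ⟨u, v, h, ⟨hvu, R, hR, hRuv⟩, hvz⟩
  rcases hchain.total hv hy with hvy | hyv
  · rcases (hP R hR).spref_or_spref hRuv y with h | h
    · exact Or.inl ⟨u, y, hxu, ⟨hyu, R, hR, h⟩, .refl⟩
    · exact Or.inr ⟨y, v, .refl, ⟨hvy, R, hR, h⟩, hvz⟩
  · rcases hvz.split hP hD ⟨hy.1, hyv⟩ with h | h | ⟨h, -⟩
    · exact Or.inl ⟨u, v, hxu, ⟨hvu, R, hR, hRuv⟩, h.forcedWeak⟩
    · exact Or.inr h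
    · exact Or.inl ⟨u, v, hxu, ⟨hvu, R, hR, hRuv⟩, h⟩

theorem Prescribed.trans (hP : ∀ R ∈ P, IsPref R) (hD : DiamondFree (· ≤ · : Y → Y → Prop))
    (hxy : Prescribed P x y) (hyz : Prescribed P y z)
    (hxz : SymmGen (· ≤ ·) x z) : Prescribed P x z := by
  rcases hxy with ⟨hyx, hxy⟩ | ⟨hxy_le, hxy⟩ <;> rcases hyz with ⟨hzy, hyz⟩ | ⟨hyz_le, hyz⟩
  · exact Or.inl ⟨hzy.trans hyx, hxy.trans hyz⟩
  · rcases hxz with hxz | hzx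
    · exact Or.inr ⟨hxz, fun h => hyz (h.trans_forcedWeak hxy)⟩
    · rcases hxy.split hP hD ⟨hyz_le, hzx⟩ with h | h | h
      · exact Or.inl ⟨hzx, h.forcedWeak⟩
      · exact absurd h hyz
      · exact Or.inl ⟨hzx, h.1⟩
  · rcases hxz with hxz | hzx
    · exact Or.inr ⟨hxz, fun h => hxy (hyz.trans_forcedStrict h)⟩
    · rcases hyz.split hP hD ⟨hzx, hxy_le⟩ with h | h | h
      · exact absurd h hxy
      · exact Or.inl ⟨hzx, h.forcedWeak⟩
      · exact Or.inl ⟨hzx, h.2⟩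
  · exact Or.inr ⟨hxy_le.trans hyz_le, fun h => (h.split hP hD ⟨hxy_le, hyz_le⟩).elim hyz hxy⟩

theorem Prescribed.refl (x : Y) : Prescribed P x x :=
  Or.inl ⟨le_rfl, .refl⟩

theorem Prescribed.symmGen (h : Prescribed P x y) : SymmGen (· ≤ ·) x y :=
  h.elim (fun h => .of_ge h.1) (fun h => .of_le h.1)

theorem Prescribed.or_prescribed (h : SymmGen (· ≤ ·) x y) :
    Prescribed P x y ∨ Prescribed P y x := by
  rcases h with hxy | hyx
  · by_cases hs : ForcedStrict P y x
    · exact Or.inr (Or.inl ⟨hxy, hs.forcedWeak⟩)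
    · exact Or.inl (Or.inr ⟨hxy, hs⟩)
  · by_cases hs : ForcedStrict P x y
    · exact Or.inl (Or.inl ⟨hyx, hs.forcedWeak⟩)
    · exact Or.inr (Or.inr ⟨hyx, hs⟩)

theorem prescribed_iff_of_le (h : y ≤ x) : Prescribed P x y ↔ ForcedWeak P x y := by
  refine ⟨fun h' => h'.elim And.right fun h'' => ?_, fun h' => Or.inl ⟨h, h'⟩⟩
  obtain rfl := le_antisymm h''.1 h
  exact .refl

theorem prescribed_iff_of_ge (h : x ≤ y) : Prescribed P x y ↔ ¬ ForcedStrict P y x := by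
  refine ⟨fun h' => h'.elim (fun h'' => ?_) And.right, fun h' => Or.inr ⟨h, h'⟩⟩
  obtain rfl := le_antisymm h h''.1
  exact fun hs => hs.lt.false

theorem _root_.IsUB.rel_of_forcedWeak {R' : Y → Y → Prop} (hU : IsUB P R')
    (h : ForcedWeak P x y) : R' x y := by
  induction h with
  | refl => exact (hU.1.1 x x).elim id id
  | tail _ hstep ih =>
    obtain ⟨hcb, R, hR, hRbc⟩ := hstep
    exact hU.1.2 ih ((hU.2 R hR _ _ hcb).1 hRbc)

theorem _root_.IsUB.spref_of_forcedStrict {R' : Y → Y → Prop} (hU : IsUB P R')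
    (h : ForcedStrict P x y) : SPref R' x y := by
  obtain ⟨u, v, hxu, ⟨hvu, R, hR, hRuv⟩, hvy⟩ := h
  have huv := (hU.2 R hR u v hvu).2 hRuv
  have hxu' := hU.rel_of_forcedWeak hxu
  have hvy' := hU.rel_of_forcedWeak hvy
  exact ⟨hU.1.2 (hU.1.2 hxu' huv.1) hvy', fun hyx => huv.2 (hU.1.2 (hU.1.2 hvy' hyx) hxu')⟩

theorem isMUB_of_agrees_with_prescribed {Rs : Y → Y → Prop} (hRs : IsPref Rs)
    (hagree : ∀ x y, SymmGen (· ≤ ·) x y → (Rs x y ↔ Prescribed P x y)) : IsMUB P Rs := by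
  have hweak : ∀ x y, y ≤ x → (Rs x y ↔ ForcedWeak P x y) := fun x y h =>
    (hagree x y (.of_ge h)).trans (prescribed_iff_of_le h)
  have hstrict : ∀ x y, y ≤ x → (Rs y x ↔ ¬ ForcedStrict P x y) := fun x y h =>
    (hagree y x (.of_le h)).trans (prescribed_iff_of_ge h)
  refine ⟨⟨hRs, fun R hR x y hyx => ⟨fun h => ?_, fun h => ?_⟩⟩,
    fun R' hR' x y hyx => ⟨fun h => ?_, fun h => ?_⟩⟩
  · exact (hweak x y hyx).2 (.single ⟨hyx, R, hR, h⟩)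
  · have hs : ForcedStrict P x y := StrictForcedStep.forcedStrict ⟨hyx, R, hR, h⟩
    exact ⟨(hweak x y hyx).2 hs.forcedWeak, fun h' => (hstrict x y hyx).1 h' hs⟩
  · exact hR'.rel_of_forcedWeak ((hweak x y hyx).1 h)
  · exact hR'.spref_of_forcedStrict (not_not.1 fun hs => h.2 ((hstrict x y hyx).2 hs))

end SingleCrossing

open SingleCrossing

theorem mub_exists_of_crown_diamond_free_general (X : Type*) [PartialOrder X]
    (hcrown : CrownFree (· ≤ · : X → X → Prop))
    (hdiamond : DiamondFree (· ≤ · : X → X → Prop)) :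
    ∀ P : Set (X → X → Prop), (∀ R ∈ P, IsPref R) → ∃ Rs, IsMUB P Rs := by
  intro P hP
  have hclosed : ∀ x y, ReflTransGen (Prescribed P) x y → SymmGen (· ≤ ·) x y →
      Prescribed P x y := fun x y =>
    hcrown.rel_of_reflTransGen Prescribed.refl (fun _ _ => Prescribed.symmGen)
      (fun _ _ _ => Prescribed.trans hP hdiamond)
  obtain ⟨Rs, hRs, hext⟩ := exists_isPref_extension (ReflTransGen (Prescribed P))
  refine ⟨Rs, isMUB_of_agrees_with_prescribed hRs fun x y hxy =>
    ⟨fun h => ?_, fun h => (hext x y (.single h)).1⟩⟩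
  by_contra hn
  have hyx : Prescribed P y x := (Prescribed.or_prescribed hxy).resolve_left hn
  exact (hext y x (.single hyx)).2 (fun h' => hn (hclosed x y h' hxy)) h

/-- Existence: if the partial order is crown- and diamond-free, every set of preferences
has a minimum upper bound w.r.t. single-crossing dominance. -/
theorem mub_exists_of_crown_diamond_free (X : Type*) [Nonempty X] [PartialOrder X]
    (hcrown : CrownFree (· ≤ · : X → X → Prop))
    (hdiamond : DiamondFree (· ≤ · : X → X → Prop)) :
    ∀ P : Set (X → X → Prop), (∀ R ∈ P, IsPref R) → ∃ Rs, IsMUB P Rs :=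
  mub_exists_of_crown_diamond_free_general X hcrown hdiamond
end

section
/- If the partial order ≿ on X is complete (total), then every set of preferences on X has exactly one minimum upper bound with respect to single-crossing dominance. -/
variable {X : Type*}

namespace MUBaux

variable [PartialOrder X]

/-- Base forced weak link. -/
def Fp (P : Set (X → X → Prop)) (u v : X) : Prop := v ≤ u ∧ ∃ R ∈ P, R u v

/-- Base forced strict link. -/
def Fsp (P : Set (X → X → Prop)) (u v : X) : Prop := v ≤ u ∧ ∃ R ∈ P, SPref R u v

/-- Forced weak preference: chains of base links. -/
def TCF (P : Set (X → X → Prop)) : X → X → Prop := Relation.ReflTransGen (Fp P)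

/-- Forced strict preference: chain with at least one strict link. -/
def TCS (P : Set (X → X → Prop)) (u v : X) : Prop :=
  ∃ a b, TCF P u a ∧ Fsp P a b ∧ TCF P b v

variable {P : Set (X → X → Prop)}

lemma Fsp_Fp {u v : X} (h : Fsp P u v) : Fp P u v := by
  obtain ⟨h1, R, hR, hs⟩ := h
  exact ⟨h1, R, hR, hs.1⟩

lemma TCS_TCF {u v : X} (h : TCS P u v) : TCF P u v := by
  obtain ⟨a, b, t1, s, t2⟩ := h
  exact t1.trans ((Relation.ReflTransGen.single (Fsp_Fp s)).trans t2)

lemma TCS_trans_TCF {u v w : X} (h : TCS P u v) (h' : TCF P v w) : TCS P u w := by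
  obtain ⟨a, b, t1, s, t2⟩ := h
  exact ⟨a, b, t1, s, t2.trans h'⟩

lemma TCF_trans_TCS {u v w : X} (h : TCF P u v) (h' : TCS P v w) : TCS P u w := by
  obtain ⟨a, b, t1, s, t2⟩ := h'
  exact ⟨a, b, h.trans t1, s, t2⟩

lemma sound_TCF {R'' : X → X → Prop} (h'' : IsUB P R'') {u v : X} (h : TCF P u v) :
    R'' u v := by
  induction h with
  | refl => exact (h''.1.1 u u).elim id id
  | tail hb hbc ih =>
    obtain ⟨hle, R, hR, hRbc⟩ := hbc
    exact h''.1.2 ih ((h''.2 R hR _ _ hle).1 hRbc)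

lemma sound_TCS {R'' : X → X → Prop} (h'' : IsUB P R'') {u v : X} (h : TCS P u v) :
    SPref R'' u v := by
  obtain ⟨a, b, t1, s, t2⟩ := h
  obtain ⟨hle, R, hR, hs⟩ := s
  have hab : SPref R'' a b := (h''.2 R hR _ _ hle).2 hs
  have h1 : R'' u a := sound_TCF h'' t1
  have h2 : R'' b v := sound_TCF h'' t2
  refine ⟨h''.1.2 (h''.1.2 h1 hab.1) h2, fun hvu => hab.2 ?_⟩
  exact h''.1.2 (h''.1.2 h2 hvu) h1

lemma top_ub (htot : ∀ x y : X, x ≤ y ∨ y ≤ x) :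
    IsUB P (fun a b => b ≤ a) := by
  refine ⟨⟨fun x y => (htot y x), fun a b c hab hbc => le_trans hbc hab⟩, ?_⟩
  intro R hR x y hyx
  refine ⟨fun _ => hyx, fun hs => ⟨hyx, fun hxy => ?_⟩⟩
  have : x = y := le_antisymm hxy hyx
  subst this
  exact hs.2 hs.1

lemma consist (htot : ∀ x y : X, x ≤ y ∨ y ≤ x) {u v : X}
    (h1 : TCS P u v) (h2 : TCF P v u) : False := by
  have hs := sound_TCS (top_ub htot) h1
  exact hs.2 (sound_TCF (top_ub htot) h2)

variable (hP : ∀ R ∈ P, IsPref R)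
include hP

lemma base1 {x a z : X} (h : Fp P x a) (h1 : a ≤ z) (h2 : z ≤ x) :
    Fp P x z ∨ Fsp P z a := by
  obtain ⟨_, R, hRP, hxa⟩ := h
  obtain ⟨hc, ht⟩ := hP R hRP
  by_cases hxz : R x z
  · exact Or.inl ⟨h2, R, hRP, hxz⟩
  · have hzx : R z x := (hc x z).resolve_left hxz
    exact Or.inr ⟨h1, R, hRP, ht hzx hxa, fun haz => hxz (ht hxa haz)⟩

lemma base2 {a z w : X} (h : Fp P a z) (h1 : z ≤ w) (h2 : w ≤ a) :
    Fp P w z ∨ Fsp P a w := by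
  obtain ⟨_, R, hRP, haz⟩ := h
  obtain ⟨hc, ht⟩ := hP R hRP
  by_cases hwz : R w z
  · exact Or.inl ⟨h1, R, hRP, hwz⟩
  · have hzw : R z w := (hc w z).resolve_left hwz
    exact Or.inr ⟨h2, R, hRP, ht haz hzw, fun hwa => hwz (ht hwa haz)⟩

lemma baseS {a b y : X} (h : Fsp P a b) (h1 : b ≤ y) (h2 : y ≤ a) :
    Fsp P a y ∨ Fsp P y b := by
  obtain ⟨_, R, hRP, hab, hnba⟩ := h
  obtain ⟨hc, ht⟩ := hP R hRP
  by_cases hby : R b y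
  · exact Or.inl ⟨h2, R, hRP, ht hab hby, fun hya => hnba (ht hby hya)⟩
  · have hyb : R y b := (hc b y).resolve_left hby
    exact Or.inr ⟨h1, R, hRP, hyb, hby⟩

variable (htot : ∀ x y : X, x ≤ y ∨ y ≤ x)
include htot

lemma lem1 {x y : X} (h : TCF P x y) : ∀ z, y ≤ z → z ≤ x → TCF P x z ∨ TCS P z y := by
  induction h using Relation.ReflTransGen.head_induction_on with
  | refl =>
    intro z hyz hzy
    have : z = y := le_antisymm hzy hyz
    subst this
    exact Or.inl Relation.ReflTransGen.refl
  | head hac hcy ih =>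
    intro z hyz hza
    rcases htot z _ with hzc | hcz
    · rcases ih z hyz hzc with htcf | hts
      · exact Or.inl (Relation.ReflTransGen.head hac htcf)
      · exact Or.inr hts
    · rcases base1 hP hac hcz hza with hf | hfs
      · exact Or.inl (Relation.ReflTransGen.single hf)
      · exact Or.inr ⟨z, _, Relation.ReflTransGen.refl, hfs, hcy⟩

lemma lem2 {u z : X} (h : TCF P u z) : ∀ w, z ≤ w → w ≤ u → TCF P w z ∨ TCS P u w := by
  induction h with
  | refl =>
    intro w hzw hwu
    have : w = u := le_antisymm hwu hzw
    subst this
    exact Or.inl Relation.ReflTransGen.refl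
  | tail hub hbc ih =>
    intro w hcw hwu
    rcases htot _ w with hbw | hwb
    · rcases ih w hbw hwu with htcf | hts
      · exact Or.inl (htcf.tail hbc)
      · exact Or.inr hts
    · rcases base2 hP hbc hcw hwb with hf | hfs
      · exact Or.inl (Relation.ReflTransGen.single hf)
      · exact Or.inr ⟨_, w, hub, hfs, Relation.ReflTransGen.refl⟩

lemma lem3 {z x y : X} (h : TCS P z x) (h1 : x ≤ y) (h2 : y ≤ z) :
    TCS P z y ∨ TCS P y x := by
  obtain ⟨a, b, t1, s, t2⟩ := h
  rcases htot a y with hay | hya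
  · rcases lem2 hP htot t1 y hay h2 with htcf | hts
    · exact Or.inr ⟨a, b, htcf, s, t2⟩
    · exact Or.inl hts
  · rcases htot y b with hyb | hby
    · rcases lem1 hP htot t2 y h1 hyb with htcf | hts
      · exact Or.inl ⟨a, b, t1, s, htcf⟩
      · exact Or.inr hts
    · rcases baseS hP s hby hya with hfs | hfs
      · exact Or.inl ⟨a, y, t1, hfs, Relation.ReflTransGen.refl⟩
      · exact Or.inr ⟨y, b, Relation.ReflTransGen.refl, hfs, t2⟩

omit hP
omit htot

lemma sc_antisymm {R S : X → X → Prop} (htot : ∀ x y : X, x ≤ y ∨ y ≤ x)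
    (hR : IsPref R) (hS : IsPref S) (h1 : SC R S) (h2 : SC S R) : R = S := by
  have key : ∀ a b : X, b ≤ a → (R a b ↔ S a b) ∧ (R b a ↔ S b a) := by
    intro a b hba
    have hiff1 : R a b ↔ S a b := ⟨(h2 a b hba).1, (h1 a b hba).1⟩
    have hsiff : SPref R a b ↔ SPref S a b := ⟨(h2 a b hba).2, (h1 a b hba).2⟩
    refine ⟨hiff1, ?_⟩
    have e1 : R b a ↔ ¬ SPref R a b := by
      constructor
      · exact fun h hs => hs.2 h
      · intro h
        by_cases hba' : R b a
        · exact hba'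
        · exact absurd ⟨(hR.1 a b).resolve_right hba', hba'⟩ h
    have e2 : S b a ↔ ¬ SPref S a b := by
      constructor
      · exact fun h hs => hs.2 h
      · intro h
        by_cases hba' : S b a
        · exact hba'
        · exact absurd ⟨(hS.1 a b).resolve_right hba', hba'⟩ h
    rw [e1, e2, hsiff]
  funext u v
  apply propext
  rcases htot v u with h | h
  · exact (key u v h).1
  · exact (key v u h).2

end MUBaux

/-- If the partial order is complete (total), every set of preferences has exactly one
minimum upper bound w.r.t. single-crossing dominance. -/
theorem mub_unique_of_total (X : Type*) [Nonempty X] [PartialOrder X]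
    (htot : ∀ x y : X, x ≤ y ∨ y ≤ x) :
    ∀ P : Set (X → X → Prop), (∀ R ∈ P, IsPref R) → ∃! Rs, IsMUB P Rs := by
  intro P hP
  open MUBaux in
  set Rs : X → X → Prop :=
    fun u v => (v ≤ u ∧ TCF P u v) ∨ (u ≤ v ∧ ¬ TCS P v u) with hRs
  have hpref : IsPref Rs := by
    constructor
    · intro u v
      rcases htot v u with h | h
      · by_cases hts : TCS P u v
        · exact Or.inl (Or.inl ⟨h, TCS_TCF hts⟩)
        · exact Or.inr (Or.inr ⟨h, hts⟩)
      · by_cases hts : TCS P v u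
        · exact Or.inr (Or.inl ⟨h, TCS_TCF hts⟩)
        · exact Or.inl (Or.inr ⟨h, hts⟩)
    · rintro x y z (⟨hyx, fxy⟩ | ⟨hxy', hns⟩) (⟨hzy, fyz⟩ | ⟨hyz', hns2⟩)
      · exact Or.inl ⟨le_trans hzy hyx, fxy.trans fyz⟩
      · -- y ≤ x, TCF x y ; y ≤ z, ¬ TCS z y
        rcases htot z x with hzx | hxz
        · rcases lem1 hP htot fxy z hyz' hzx with htcf | hts
          · exact Or.inl ⟨hzx, htcf⟩
          · exact absurd hts hns2
        · exact Or.inr ⟨hxz, fun h => hns2 (TCS_trans_TCF h fxy)⟩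
      · -- x ≤ y, ¬ TCS y x ; z ≤ y, TCF y z
        rcases htot z x with hzx | hxz
        · rcases lem2 hP htot fyz x hzx hxy' with htcf | hts
          · exact Or.inl ⟨hzx, htcf⟩
          · exact absurd hts hns
        · exact Or.inr ⟨hxz, fun h => hns (TCF_trans_TCS fyz h)⟩
      · -- x ≤ y, ¬ TCS y x ; y ≤ z, ¬ TCS z y
        exact Or.inr ⟨le_trans hxy' hyz',
          fun h => (lem3 hP htot h hxy' hyz').elim hns2 hns⟩
  have hub : IsUB P Rs := by
    refine ⟨hpref, ?_⟩
    intro R hRP x y hyx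
    refine ⟨fun h => Or.inl ⟨hyx, Relation.ReflTransGen.single ⟨hyx, R, hRP, h⟩⟩,
      fun hs => ⟨Or.inl ⟨hyx, Relation.ReflTransGen.single ⟨hyx, R, hRP, hs.1⟩⟩, ?_⟩⟩
    rintro (⟨hxy, _⟩ | ⟨_, hn⟩)
    · have : x = y := le_antisymm hxy hyx
      subst this
      exact hs.2 hs.1
    · exact hn ⟨x, y, Relation.ReflTransGen.refl, ⟨hyx, R, hRP, hs⟩,
        Relation.ReflTransGen.refl⟩
  have hmin : ∀ R'', IsUB P R'' → SC R'' Rs := by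
    intro R'' hub'' x y hyx
    constructor
    · rintro (⟨_, tcf⟩ | ⟨hxy, _⟩)
      · exact sound_TCF hub'' tcf
      · have : x = y := le_antisymm hxy hyx
        subst this
        exact (hub''.1.1 x x).elim id id
    · intro hs
      have hTS : TCS P x y := by
        by_contra h
        exact hs.2 (Or.inr ⟨hyx, h⟩)
      exact sound_TCS hub'' hTS
  refine ⟨Rs, ⟨hub, hmin⟩, ?_⟩
  intro R' hR'
  exact sc_antisymm htot hR'.1.1 hpref (hmin R' hR'.1) (hR'.2 Rs hub)
end

section
/- If x and y are ≿-incomparable elements of X, then every set P of preferences has two upper bounds ⪰' and ⪰'' (with respect to single-crossing dominance) such that x ≻' y and y ≻'' x. Consequently, if every set of preferences has at most one minimum upper bound, then ≿ is complete. -/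
variable {X : Type*}

lemma aux_ext [PartialOrder X] {x y : X} (hxy : ¬ x ≤ y) (hyx : ¬ y ≤ x) :
    ∃ s : X → X → Prop, IsPref s ∧ (∀ R : X → X → Prop, SC s R) ∧ SPref s x y := by
  classical
  set r : X → X → Prop := fun a b => b ≤ a ∨ (x ≤ a ∧ b ≤ y) with hr
  haveI : IsPartialOrder X r := by
    refine { refl := ?_, trans := ?_, antisymm := ?_ }
    · intro a; exact Or.inl le_rfl
    · intro a b c hab hbc
      rcases hab with h1 | ⟨h1, h1'⟩ <;> rcases hbc with h2 | ⟨h2, h2'⟩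
      · exact Or.inl (h2.trans h1)
      · exact Or.inr ⟨h2.trans h1, h2'⟩
      · exact Or.inr ⟨h1, h2.trans h1'⟩
      · exact absurd (h2.trans h1') hxy
    · intro a b hab hba
      rcases hab with h1 | ⟨h1, h1'⟩ <;> rcases hba with h2 | ⟨h2, h2'⟩
      · exact le_antisymm h2 h1
      · exact absurd ((h2.trans h1).trans h2') hxy
      · exact absurd ((h1.trans h2).trans h1') hxy
      · exact absurd (h1.trans h2') hxy
  obtain ⟨s, hs, hrs⟩ := extend_partialOrder r
  have hanti : ∀ a b : X, s a b → s b a → a = b := fun a b h1 h2 => hs.antisymm a b h1 h2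
  refine ⟨s, ⟨fun a b => hs.total a b, fun a b c h1 h2 => hs.trans a b c h1 h2⟩, ?_, ?_⟩
  · intro R a b hba
    refine ⟨fun _ => hrs a b (Or.inl hba), fun hR => ?_⟩
    have hne : a ≠ b := by rintro rfl; exact hR.2 hR.1
    refine ⟨hrs a b (Or.inl hba), fun hsba => hne (hanti a b (hrs a b (Or.inl hba)) hsba)⟩
  · have hsxy : s x y := hrs x y (Or.inr ⟨le_rfl, le_rfl⟩)
    refine ⟨hsxy, fun hsyx => hxy ?_⟩
    have := hanti x y hsxy hsyx
    exact this.le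

/-- If `x, y` are incomparable, every set of preferences has upper bounds `R'`, `R''`
with `x ≻' y` and `y ≻'' x`; consequently, if every set of preferences has at most one
minimum upper bound, the partial order is complete. -/
theorem two_ubs_and_completeness (X : Type*) [Nonempty X] [PartialOrder X] :
    (∀ x y : X, ¬ x ≤ y → ¬ y ≤ x →
      ∀ P : Set (X → X → Prop), (∀ R ∈ P, IsPref R) →
        ∃ R' R'' : X → X → Prop, IsUB P R' ∧ IsUB P R'' ∧
          SPref R' x y ∧ SPref R'' y x) ∧
    ((∀ P : Set (X → X → Prop), (∀ R ∈ P, IsPref R) →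
        ∀ R1 R2, IsMUB P R1 → IsMUB P R2 → R1 = R2) →
      ∀ x y : X, x ≤ y ∨ y ≤ x) := by
  constructor
  · intro x y hxy hyx P hP
    obtain ⟨s1, hs1p, hs1d, hs1⟩ := aux_ext hxy hyx
    obtain ⟨s2, hs2p, hs2d, hs2⟩ := aux_ext hyx hxy
    exact ⟨s1, s2, ⟨hs1p, fun R _ => hs1d R⟩, ⟨hs2p, fun R _ => hs2d R⟩, hs1, hs2⟩
  · intro h x y
    by_contra hc
    push_neg at hc
    obtain ⟨hxy, hyx⟩ := hc
    obtain ⟨s1, hs1p, hs1d, hs1⟩ := aux_ext hxy hyx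
    obtain ⟨s2, hs2p, hs2d, hs2⟩ := aux_ext hyx hxy
    set P : Set (X → X → Prop) := {R | IsPref R} with hP
    have hub1 : IsUB P s1 := ⟨hs1p, fun R _ => hs1d R⟩
    have hub2 : IsUB P s2 := ⟨hs2p, fun R _ => hs2d R⟩
    have hmub1 : IsMUB P s1 := ⟨hub1, fun R'' hR'' => hR''.2 s1 hs1p⟩
    have hmub2 : IsMUB P s2 := ⟨hub2, fun R'' hR'' => hR''.2 s2 hs2p⟩
    have heq := h P (fun R hR => hR) s1 s2 hmub1 hmub2
    subst heq
    exact hs1.2 hs2.1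
end

section
/- A reflexive binary relation ≥ on a set A admits a complete and transitive extension if and only if it is Suzumura-consistent, i.e., whenever a₁ ≥ a₂ ≥ … ≥ a_K, it is not the case that a_K > a₁ (where b > a means b ≥ a and not a ≥ b). An extension ≥' of ≥ is a relation such that b ≥ a implies b ≥' a and b > a implies b >' a. -/
variable {A : Type*}

/-- `r'` extends `r`: weak and strict comparisons are preserved. -/
def IsExt (r r' : A → A → Prop) : Prop :=
  ∀ a b : A, (r a b → r' a b) ∧ (r a b ∧ ¬ r b a → r' a b ∧ ¬ r' b a)

/-- Suzumura-consistency: along any finite `r`-chain `a 0 ≥ a 1 ≥ … ≥ a K`, it is not the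
case that `a K > a 0` (where `b > a` means `r b a ∧ ¬ r a b`). -/
def SuzConsistent (r : A → A → Prop) : Prop :=
  ∀ (K : ℕ) (a : ℕ → A), (∀ k, k < K → r (a k) (a (k + 1))) →
    ¬ (r (a K) (a 0) ∧ ¬ r (a 0) (a K))

/- Suzumura-consistency says exactly that whenever `a ≥ b` holds in the reflexive-transitive
closure of `≥` and `b ≥ a`, also `a ≥ b`. The closure is a preorder; collapsing its indifference
classes and applying Szpilrajn's theorem to the resulting partial order gives a linear order
whose pullback is complete, transitive, monotone and strictly monotone for the closure.
Consistency turns a strict `≥`-comparison into a strict comparison in the closure. -/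

theorem Relation.reflTransGen_iff_exists_chain {r : A → A → Prop} {b c : A} :
    Relation.ReflTransGen r b c ↔
      ∃ (K : ℕ) (f : ℕ → A), f 0 = b ∧ f K = c ∧ ∀ k < K, r (f k) (f (k + 1)) := by
  constructor
  · intro h
    induction h using Relation.ReflTransGen.head_induction_on with
    | refl => exact ⟨0, fun _ => c, rfl, rfl, fun _ hk => absurd hk (Nat.not_lt_zero _)⟩
    | @head a b hab _ ih =>
      obtain ⟨K, f, hf0, hfK, hstep⟩ := ih
      refine ⟨K + 1, fun | 0 => a | n + 1 => f n, rfl, hfK, ?_⟩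
      rintro (_ | k) hk
      · simpa [hf0] using hab
      · exact hstep k (by omega)
  · rintro ⟨K, f, rfl, rfl, hstep⟩
    have : ∀ k ≤ K, Relation.ReflTransGen r (f 0) (f k) := by
      intro k hk
      induction k with
      | zero => exact .refl
      | succ k ih => exact (ih (by omega)).tail (hstep k (by omega))
    exact this K le_rfl

theorem suzConsistent_iff_reflTransGen {r : A → A → Prop} :
    SuzConsistent r ↔ ∀ a b, Relation.ReflTransGen r a b → r b a → r a b := by
  constructor
  · intro hcons a b hab hba
    obtain ⟨K, f, rfl, rfl, hstep⟩ := Relation.reflTransGen_iff_exists_chain.mp hab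
    by_contra h
    exact hcons K f hstep ⟨hba, h⟩
  · rintro h K f hstep ⟨hK0, h0K⟩
    exact h0K (h _ _ (Relation.reflTransGen_iff_exists_chain.mpr ⟨K, f, rfl, rfl, hstep⟩) hK0)

universe u in
theorem Preorder.exists_monotone_strictMono_linearOrder (α : Type u) [Preorder α] :
    ∃ (β : Type u) (_ : LinearOrder β) (f : α → β), Monotone f ∧ StrictMono f := by
  let g : Antisymmetrization α (· ≤ ·) →o LinearExtension (Antisymmetrization α (· ≤ ·)) :=
    toLinearExtension
  have hg : StrictMono g := g.monotone.strictMono_of_injective fun _ _ h => h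
  have hq : StrictMono (toAntisymmetrization (α := α) (· ≤ ·)) :=
    fun _ _ => toAntisymmetrization_lt_toAntisymmetrization_iff.mpr
  exact ⟨_, inferInstance, g ∘ toAntisymmetrization (· ≤ ·),
    g.monotone.comp toAntisymmetrization_mono, hg.comp hq⟩

theorem SuzConsistent.of_isExt {r r' : A → A → Prop} (htotal : ∀ a b, r' a b ∨ r' b a)
    (htrans : Transitive r') (hext : IsExt r r') : SuzConsistent r := by
  have : Std.Refl r' := ⟨fun a => (htotal a a).elim id id⟩
  have : IsTrans A r' := ⟨htrans⟩
  refine suzConsistent_iff_reflTransGen.mpr fun a b hab hba => ?_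
  by_contra h
  exact ((hext b a).2 ⟨hba, h⟩).2
    (Relation.reflTransGen_le_of_le (fun x y => (hext x y).1) _ _ hab)

theorem SuzConsistent.exists_isExt {r : A → A → Prop} (hcons : SuzConsistent r) :
    ∃ r' : A → A → Prop, (∀ a b, r' a b ∨ r' b a) ∧ Transitive r' ∧ IsExt r r' := by
  let _ : Preorder A :=
    { le := Relation.ReflTransGen r
      le_refl := fun _ => .refl
      le_trans := fun _ _ _ => .trans }
  obtain ⟨β, _, f, hmono, hstrict⟩ := Preorder.exists_monotone_strictMono_linearOrder A
  refine ⟨fun a b => f a ≤ f b, fun a b => le_total _ _, fun _ _ _ => le_trans,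
    fun a b => ⟨fun hab => hmono (.single hab), fun ⟨hab, hba⟩ => ?_⟩⟩
  have hlt : a < b := lt_of_le_not_ge (.single hab) fun h =>
    hba (suzConsistent_iff_reflTransGen.mp hcons b a h hab)
  exact ⟨(hstrict hlt).le, not_le.mpr (hstrict hlt)⟩

theorem suzumura_extension_general (r : A → A → Prop) :
    (∃ r' : A → A → Prop, (∀ a b, r' a b ∨ r' b a) ∧ Transitive r' ∧ IsExt r r') ↔
      SuzConsistent r :=
  ⟨fun ⟨_, htotal, htrans, hext⟩ => .of_isExt htotal htrans hext, SuzConsistent.exists_isExt⟩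

/-- Suzumura's extension theorem: a reflexive relation admits a complete and transitive
extension iff it is Suzumura-consistent. -/
theorem suzumura_extension (r : A → A → Prop) (hrefl : Reflexive r) :
    (∃ r' : A → A → Prop, (∀ a b, r' a b ∨ r' b a) ∧ Transitive r' ∧ IsExt r r') ↔
      SuzConsistent r :=
  suzumura_extension_general r
end
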